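/- arXiv:1107.2435 — 10 statements merged into one kernel-verified Lean document; each statement's English description precedes it below -/
import Mathlib

section
/- Let μ be a nonzero positive Radon measure on ℝ that is doubling, let u : ℝ → ℝ satisfy u(b) − u(a) = μ([a,b]) for all a < b, and let v : ℝ → ℝ belong to the generalized Zygmund class Λ_μ. Set Γ(t) = u(t) + i v(t). Then there exists a constant H ≥ 1 such that |Γ(x) − Γ(a)| ≤ H |Γ(x) − Γ(b)| for all a, b, x ∈ ℝ with |x − a| ≤ |x − b|. -/
open MeasureTheory Set

/-!
The hypotheses only concern the pair `(u, v)`: `u` is nondecreasing with doubling increments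
and the second differences of `v` are bounded by increments of `u`. These conditions are
invariant under `t ↦ -t` (with `u ↦ -u(-·)`), so we may take `x ≤ b`. On `[x, b]`, comparing
the maximiser `t₀` of `|v - v x|` with `2 t₀ - x` (reflected through `b` if it overshoots) gives
`|v t - v x| ≤ 2 |v b - v x| + O(μ[x, b])`, and a point `a < x` is reflected to
`2 x - a ∈ [x, b]`. Since `Re (Γ x - Γ b) = -μ[x, b]` and `Im (Γ x - Γ b) = v x - v b`, all
error terms are bounded by `|Γ x - Γ b|`.
-/

/-- `μ` is doubling with constant `1 + δ`: for any two adjacent intervals of equal length,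
the measure of one is at most `1 + δ` times the measure of the other. -/
def DoublingWith (δ : ℝ) (μ : Measure ℝ) : Prop :=
  ∀ x h : ℝ, 0 < h →
    μ (Icc (x - h) x) ≤ ENNReal.ofReal (1 + δ) * μ (Icc x (x + h)) ∧
    μ (Icc x (x + h)) ≤ ENNReal.ofReal (1 + δ) * μ (Icc (x - h) x)

/-- `μ` is a doubling measure. -/
def IsDoubling (μ : Measure ℝ) : Prop := ∃ δ > 0, DoublingWith δ μ

/-- `g` belongs to the generalized Zygmund class `Λ_μ`. -/
def MemGenZygmund (μ : Measure ℝ) (g : ℝ → ℝ) : Prop :=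
  Continuous g ∧ ∃ M > 0, ∀ x h : ℝ, 0 ≤ h →
    |g (x + h) - 2 * g x + g (x - h)| ≤ M * (μ (Icc (x - h) (x + h))).toReal

theorem abs_sub_le_of_abs_second_difference_le {f : ℝ → ℝ} {x L K : ℝ}
    (hf : ContinuousOn f (Icc x (x + L)))
    (hK : ∀ y r, 0 ≤ r → x ≤ y - r → y + r ≤ x + 2 * L →
      |f (y + r) - 2 * f y + f (y - r)| ≤ K)
    {t : ℝ} (ht : t ∈ Icc x (x + L)) :
    |f t - f x| ≤ 2 * |f (x + L) - f x| + 2 * K := by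
  have hL : 0 ≤ L := by linarith [ht.1, ht.2]
  obtain ⟨t₀, ht₀, hmax⟩ :=
    isCompact_Icc.exists_isMaxOn ⟨t, ht⟩ (hf.sub continuousOn_const).abs
  have hle : ∀ s ∈ Icc x (x + L), |f s - f x| ≤ |f t₀ - f x| := fun s hs => hmax hs
  have hK₀ : 0 ≤ K := by
    simpa using (abs_nonneg _).trans (hK x 0 le_rfl (by simp) (by linarith))
  have hle_double : ∀ s ∈ Icc x (x + 2 * L),
      |f s - f x| ≤ 2 * |f (x + L) - f x| + |f t₀ - f x| + K := by
    rintro s ⟨hxs, hs⟩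
    rcases le_total s (x + L) with hsL | hLs
    · linarith [hle s ⟨hxs, hsL⟩, abs_nonneg (f (x + L) - f x)]
    have hsec := hK (x + L) (s - (x + L)) (by linarith) (by linarith) (by linarith)
    have hback := hle (x + L - (s - (x + L))) ⟨by linarith, by linarith⟩
    rw [add_sub_cancel] at hsec
    rw [abs_le] at hsec hback ⊢
    constructor <;> linarith [le_abs_self (f (x + L) - f x), neg_abs_le (f (x + L) - f x)]
  have hsec := hK t₀ (t₀ - x) (by linarith [ht₀.1]) (by linarith) (by linarith [ht₀.2])
  rw [sub_sub_cancel] at hsec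
  have hfar := hle_double (t₀ + (t₀ - x)) ⟨by linarith [ht₀.1], by linarith [ht₀.2]⟩
  have hmax_le : |f t₀ - f x| ≤ 2 * |f (x + L) - f x| + 2 * K := by
    rw [abs_le] at hsec hfar
    rcases abs_cases (f t₀ - f x) with ⟨h, _⟩ | ⟨h, _⟩ <;> linarith
  exact (hle t ht).trans hmax_le

/-- `u` stands for a distribution function of a doubling measure with constant `1 + δ`, and `v`
for a member of the associated Zygmund class with seminorm `M`. -/
structure IsZygmundPair (δ M : ℝ) (u v : ℝ → ℝ) : Prop where
  monotone : Monotone u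
  doubling_left : ∀ x h, 0 < h → u x - u (x - h) ≤ (1 + δ) * (u (x + h) - u x)
  doubling_right : ∀ x h, 0 < h → u (x + h) - u x ≤ (1 + δ) * (u x - u (x - h))
  continuous : Continuous v
  second_difference_le : ∀ x h, 0 ≤ h →
    |v (x + h) - 2 * v x + v (x - h)| ≤ M * (u (x + h) - u (x - h))

theorem IsZygmundPair.of_doublingWith {μ : Measure ℝ} [IsLocallyFiniteMeasure μ] {δ M : ℝ}
    {u v : ℝ → ℝ} (hδ : 0 ≤ 1 + δ) (hdb : DoublingWith δ μ)
    (hu : ∀ a b : ℝ, a < b → u b - u a = (μ (Icc a b)).toReal) (hvc : Continuous v)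
    (hv : ∀ x h : ℝ, 0 ≤ h →
      |v (x + h) - 2 * v x + v (x - h)| ≤ M * (μ (Icc (x - h) (x + h))).toReal) :
    IsZygmundPair δ M u v := by
  have toReal_le : ∀ {s t : Set ℝ}, IsCompact t →
      μ s ≤ ENNReal.ofReal (1 + δ) * μ t → (μ s).toReal ≤ (1 + δ) * (μ t).toReal := by
    intro s t ht hst
    rw [← ENNReal.toReal_ofReal hδ, ← ENNReal.toReal_mul]
    exact ENNReal.toReal_mono (ENNReal.mul_ne_top ENNReal.ofReal_ne_top ht.measure_lt_top.ne) hst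
  refine ⟨?_, fun x h hh => ?_, fun x h hh => ?_, hvc, fun x h hh => ?_⟩
  · exact monotone_iff_forall_lt.mpr fun a b hab =>
      sub_nonneg.mp ((hu a b hab).symm ▸ ENNReal.toReal_nonneg)
  · rw [hu (x - h) x (by linarith), hu x (x + h) (by linarith)]
    exact toReal_le isCompact_Icc (hdb x h hh).1
  · rw [hu (x - h) x (by linarith), hu x (x + h) (by linarith)]
    exact toReal_le isCompact_Icc (hdb x h hh).2
  · rcases hh.eq_or_lt with rfl | hh
    · simp [show v x - 2 * v x + v x = 0 by ring]
    · rw [hu (x - h) (x + h) (by linarith)]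
      exact hv x h hh.le

namespace IsZygmundPair

variable {δ M : ℝ} {u v : ℝ → ℝ}

theorem reflect (hP : IsZygmundPair δ M u v) :
    IsZygmundPair δ M (fun t => -u (-t)) (fun t => v (-t)) where
  monotone a b hab := neg_le_neg (hP.monotone (neg_le_neg hab))
  doubling_left x h hh := by
    have := hP.doubling_right (-x) h hh
    rw [neg_sub, neg_add']
    rw [neg_add_eq_sub] at this
    linarith
  doubling_right x h hh := by
    have := hP.doubling_left (-x) h hh
    rw [neg_sub, neg_add']
    rw [neg_add_eq_sub] at this
    linarith
  continuous := hP.continuous.comp continuous_neg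
  second_difference_le x h hh := by
    have := hP.second_difference_le (-x) h hh
    rw [neg_sub, neg_add']
    rw [neg_add_eq_sub] at this
    convert this using 2 <;> ring

theorem sub_le_two_add_mul_sub (hP : IsZygmundPair δ M u v) {x b : ℝ} (hxb : x ≤ b) :
    u (2 * b - x) - u x ≤ (2 + δ) * (u b - u x) := by
  rcases hxb.eq_or_lt with rfl | hxb
  · simp [two_mul]
  have h := hP.doubling_right b (b - x) (sub_pos.mpr hxb)
  rw [sub_sub_cancel, ← add_sub_assoc, ← two_mul] at h
  linarith

theorem abs_v_sub_le_of_mem_Icc (hP : IsZygmundPair δ M u v) (hM : 0 ≤ M) {x b t : ℝ}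
    (ht : t ∈ Icc x b) :
    |v t - v x| ≤ 2 * |v b - v x| + 2 * ((2 + δ) * M * (u b - u x)) := by
  have hxb : x ≤ b := ht.1.trans ht.2
  have hK : ∀ y r, 0 ≤ r → x ≤ y - r → y + r ≤ x + 2 * (b - x) →
      |v (y + r) - 2 * v y + v (y - r)| ≤ (2 + δ) * M * (u b - u x) := by
    intro y r hr hleft hright
    have hu_le : u (y + r) - u (y - r) ≤ u (2 * b - x) - u x := by
      linarith [hP.monotone hleft, hP.monotone (show y + r ≤ 2 * b - x by linarith)]
    calc |v (y + r) - 2 * v y + v (y - r)| ≤ M * (u (y + r) - u (y - r)) :=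
          hP.second_difference_le y r hr
      _ ≤ M * ((2 + δ) * (u b - u x)) := by
          gcongr
          exact hu_le.trans (hP.sub_le_two_add_mul_sub hxb)
      _ = (2 + δ) * M * (u b - u x) := by ring
  have := abs_sub_le_of_abs_second_difference_le (hP.continuous.continuousOn) hK
    (by rwa [add_sub_cancel])
  rwa [add_sub_cancel] at this

theorem abs_u_sub_le (hP : IsZygmundPair δ M u v) (hδ : 0 ≤ δ) {a b x : ℝ}
    (hab : |x - a| ≤ b - x) : |u x - u a| ≤ (1 + δ) * (u b - u x) := by
  have hxb : u x ≤ u b := hP.monotone (by linarith [abs_nonneg (x - a)])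
  rcases le_or_gt x a with hxa | hax
  · rw [abs_sub_comm, abs_of_nonneg (sub_nonneg.mpr (hP.monotone hxa))]
    have : u a ≤ u b := hP.monotone (by linarith [le_abs_self (x - a), neg_abs_le (x - a)])
    nlinarith
  · have h := hP.doubling_left x (x - a) (sub_pos.mpr hax)
    rw [sub_sub_cancel] at h
    have : u (x + (x - a)) ≤ u b := hP.monotone (by linarith [le_abs_self (x - a)])
    rw [abs_of_nonneg (sub_nonneg.mpr (hP.monotone hax.le))]
    nlinarith

theorem abs_v_sub_le (hP : IsZygmundPair δ M u v) (hδ : 0 ≤ δ) (hM : 0 ≤ M) {a b x : ℝ}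
    (hab : |x - a| ≤ b - x) :
    |v x - v a| ≤ 2 * |v x - v b| + 3 * ((2 + δ) * M * (u b - u x)) := by
  have hxb : x ≤ b := by linarith [abs_nonneg (x - a)]
  have hK : 0 ≤ (2 + δ) * M * (u b - u x) := by
    have := hP.monotone hxb
    have : 0 ≤ u b - u x := by linarith
    positivity
  rw [abs_sub_comm (v x) (v b)]
  rcases le_or_gt x a with hxa | hax
  · rw [abs_sub_comm]
    have := hP.abs_v_sub_le_of_mem_Icc hM
      ⟨hxa, show a ≤ b by linarith [le_abs_self (x - a), neg_abs_le (x - a)]⟩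
    linarith
  have hfar := hP.abs_v_sub_le_of_mem_Icc hM (x := x) (b := b) (t := x + (x - a))
    ⟨by linarith, by linarith [le_abs_self (x - a)]⟩
  have hsec := hP.second_difference_le x (x - a) (by linarith)
  rw [sub_sub_cancel] at hsec
  have hu := hP.abs_u_sub_le hδ hab
  rw [abs_of_nonneg (sub_nonneg.mpr (hP.monotone hax.le))] at hu
  have hu_far : u (x + (x - a)) - u x ≤ u b - u x := by
    linarith [hP.monotone (show x + (x - a) ≤ b by linarith [le_abs_self (x - a)])]
  have hsec' : |v (x + (x - a)) - 2 * v x + v a| ≤ (2 + δ) * M * (u b - u x) := by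
    refine hsec.trans ?_
    nlinarith
  rw [abs_le] at hfar hsec' ⊢
  constructor <;> linarith

theorem three_point_of_le (hP : IsZygmundPair δ M u v) (hδ : 0 ≤ δ) (hM : 0 ≤ M)
    {a b x : ℝ} (hab : |x - a| ≤ b - x) :
    |u x - u a| + |v x - v a| ≤ (2 + δ) * (1 + 3 * M) * (|u x - u b| + |v x - v b|) := by
  have hxb : u x ≤ u b := hP.monotone (by linarith [abs_nonneg (x - a)])
  rw [abs_sub_comm (u x) (u b), abs_of_nonneg (sub_nonneg.mpr hxb)]
  have hu := hP.abs_u_sub_le hδ hab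
  have hv := hP.abs_v_sub_le hδ hM hab
  nlinarith [mul_nonneg hM (sub_nonneg.mpr hxb), mul_nonneg hδ (abs_nonneg (v x - v b)),
    mul_nonneg hM (abs_nonneg (v x - v b)), mul_nonneg (mul_nonneg hδ hM) (abs_nonneg (v x - v b))]

theorem three_point (hP : IsZygmundPair δ M u v) (hδ : 0 ≤ δ) (hM : 0 ≤ M)
    {a b x : ℝ} (hab : |x - a| ≤ |x - b|) :
    |u x - u a| + |v x - v a| ≤ (2 + δ) * (1 + 3 * M) * (|u x - u b| + |v x - v b|) := by
  rcases le_or_gt x b with hxb | hbx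
  · rw [abs_sub_comm x b, abs_of_nonneg (sub_nonneg.mpr hxb)] at hab
    exact hP.three_point_of_le hδ hM hab
  · have h := hP.reflect.three_point_of_le hδ hM (a := -a) (b := -b) (x := -x)
      (by rwa [neg_sub_neg, abs_sub_comm, neg_sub_neg, ← abs_of_pos (sub_pos.mpr hbx)])
    simp only [neg_neg, neg_sub_neg] at h
    rwa [abs_sub_comm (u a), abs_sub_comm (u b)] at h

end IsZygmundPair

namespace Complex

theorem norm_ofReal_add_I_mul_le (p q : ℝ) : ‖(p : ℂ) + I * q‖ ≤ |p| + |q| := by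
  simpa using norm_le_abs_re_add_abs_im ((p : ℂ) + I * q)

theorem abs_add_abs_le_two_mul_norm_ofReal_add_I_mul (p q : ℝ) :
    |p| + |q| ≤ 2 * ‖(p : ℂ) + I * q‖ := by
  have hre := abs_re_le_norm ((p : ℂ) + I * q)
  have him := abs_im_le_norm ((p : ℂ) + I * q)
  simp at hre him
  linarith

end Complex

theorem three_point_condition_of_genZygmund_general
    (μ : Measure ℝ) [IsLocallyFiniteMeasure μ]
    (hdbl : IsDoubling μ) (u v : ℝ → ℝ)
    (hu : ∀ a b : ℝ, a < b → u b - u a = (μ (Icc a b)).toReal)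
    (hv : MemGenZygmund μ v) :
    ∃ H : ℝ, 1 ≤ H ∧ ∀ a b x : ℝ, |x - a| ≤ |x - b| →
      ‖((u x : ℂ) + Complex.I * (v x : ℂ)) - ((u a : ℂ) + Complex.I * (v a : ℂ))‖
        ≤ H * ‖((u x : ℂ) + Complex.I * (v x : ℂ)) -
            ((u b : ℂ) + Complex.I * (v b : ℂ))‖ := by
  obtain ⟨δ, hδ, hdb⟩ := hdbl
  obtain ⟨hvc, M, hM, hzyg⟩ := hv
  have hP : IsZygmundPair δ M u v := .of_doublingWith (by linarith) hdb hu hvc hzyg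
  have hΓ : ∀ s t : ℝ,
      ((u s : ℂ) + Complex.I * (v s : ℂ)) - ((u t : ℂ) + Complex.I * (v t : ℂ)) =
        ((u s - u t : ℝ) : ℂ) + Complex.I * ((v s - v t : ℝ) : ℂ) := by
    intro s t
    push_cast
    ring
  refine ⟨2 * ((2 + δ) * (1 + 3 * M)), by nlinarith, fun a b x hab => ?_⟩
  rw [hΓ, hΓ]
  calc _ ≤ |u x - u a| + |v x - v a| := Complex.norm_ofReal_add_I_mul_le _ _
    _ ≤ (2 + δ) * (1 + 3 * M) * (|u x - u b| + |v x - v b|) := hP.three_point hδ.le hM.le hab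
    _ ≤ (2 + δ) * (1 + 3 * M) *
          (2 * ‖((u x - u b : ℝ) : ℂ) + Complex.I * ((v x - v b : ℝ) : ℂ)‖) := by
      gcongr
      exact Complex.abs_add_abs_le_two_mul_norm_ofReal_add_I_mul _ _
    _ = _ := by ring

/-- If `μ` is a nonzero doubling Radon measure on `ℝ`, `u` is an antiderivative of `μ`
and `v ∈ Λ_μ`, then `Γ(t) = u(t) + i v(t)` satisfies the three-point condition
`|Γ(x) − Γ(a)| ≤ H |Γ(x) − Γ(b)|` whenever `|x − a| ≤ |x − b|`. -/
theorem three_point_condition_of_genZygmund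
    (μ : Measure ℝ) [IsLocallyFiniteMeasure μ] (hμ0 : μ ≠ 0)
    (hdbl : IsDoubling μ) (u v : ℝ → ℝ)
    (hu : ∀ a b : ℝ, a < b → u b - u a = (μ (Icc a b)).toReal)
    (hv : MemGenZygmund μ v) :
    ∃ H : ℝ, 1 ≤ H ∧ ∀ a b x : ℝ, |x - a| ≤ |x - b| →
      ‖((u x : ℂ) + Complex.I * (v x : ℂ)) - ((u a : ℂ) + Complex.I * (v a : ℂ))‖
        ≤ H * ‖((u x : ℂ) + Complex.I * (v x : ℂ)) -
            ((u b : ℂ) + Complex.I * (v b : ℂ))‖ :=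
  three_point_condition_of_genZygmund_general μ hdbl u v hu hv
end

section
/- If f : ℂ → ℂ is a nonconstant delta-monotone map, then there exist a constant L ≥ 0 and an L-Lipschitz function g : ℝ → ℝ such that f(ℝ) = {u + i g(u) : u ∈ ℝ}; that is, the image of the real line under f is a Lipschitz graph over ℝ. -/
/-!
Write `w ∈ deltaCone δ v` for `δ ‖w‖ ‖v‖ ≤ ⟪w, v⟫`, so that `f` is δ-monotone iff
`f z - f ζ ∈ deltaCone δ (z - ζ)`. By Cauchy–Schwarz `⟪w, e (1 + δ i)⟫ ≥ 0` for
`w ∈ deltaCone δ e`, hence `deltaCone δ e ∩ -deltaCone δ (e (1 + δ i)) = 0`; and since the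
geometric sums of the rotation `(1 + δ i) / ‖1 + δ i‖` stay bounded, `0` is the only vector lying
in every `deltaCone δ ((1 + δ i) ^ k)`.

Along a line, `t ↦ ⟪f (z + t e), e⟫` is nondecreasing and dominates `δ ‖e‖` times the variation of
`f`, so `f` has a limit along every ray on which this quantity is bounded. If `Re f` were bounded
above on `ℝ`, its limit `F` there would satisfy `F - f(ℂ) ⊆ deltaCone δ 1`. Then `⟪f, 1 + δ i⟫` is
bounded, so `f` has limits along the rays in direction `1 + δ i`; by disjointness of the two cones
they equal `F`, whence `F - f(ℂ) ⊆ deltaCone δ (1 + δ i)`. Iterating, `f` is constant. The same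
comparison of the one-sided limits along the rays ending at a point `s` shows that every cluster
value of `f` at `s` is `f s`; as monotone maps are locally bounded, `f` is continuous.

So `x ↦ Re f x` is a continuous nondecreasing surjection of `ℝ`, and
`δ ‖f a - f b‖ ≤ |Re f a - Re f b|` makes `f(ℝ)` the graph of a `δ⁻¹`-Lipschitz function of the
real part.
-/

open Set

/-- `f` is delta-monotone: there is `δ > 0` with
`Re((f z − f ζ)/(z − ζ)) ≥ δ |f z − f ζ|/|z − ζ|` for all distinct `z, ζ`. -/
def DeltaMonotone (f : ℂ → ℂ) : Prop :=
  ∃ δ > 0, ∀ z ζ : ℂ, z ≠ ζ →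
    δ * (‖f z - f ζ‖ / ‖z - ζ‖) ≤ ((f z - f ζ) / (z - ζ)).re

open Filter Topology Complex
open scoped InnerProductSpace

-- For `v ≠ 0`, the closed cone of the vectors at angle at most `arccos δ` from `v`.
def deltaCone (δ : ℝ) (v : ℂ) : Set ℂ := {w | δ * (‖w‖ * ‖v‖) ≤ ⟪w, v⟫_ℝ}

def DeltaMonotoneWith (δ : ℝ) (f : ℂ → ℂ) : Prop := ∀ z ζ, f z - f ζ ∈ deltaCone δ (z - ζ)

section deltaCone

variable {δ : ℝ} {v w e : ℂ}

lemma smul_mem_deltaCone {c : ℝ} (hc : 0 ≤ c) (h : w ∈ deltaCone δ v) :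
    w ∈ deltaCone δ (c • v) := by
  simp only [deltaCone, mem_ofPred_eq, norm_smul, Real.norm_of_nonneg hc, inner_smul_right] at h ⊢
  nlinarith

lemma mem_deltaCone_of_tendsto {ι : Type*} {l : Filter ι} [l.NeBot] {w v : ι → ℂ} {a b : ℂ}
    (hw : Tendsto w l (𝓝 a)) (hv : Tendsto v l (𝓝 b)) (h : ∀ᶠ i in l, w i ∈ deltaCone δ (v i)) :
    a ∈ deltaCone δ b :=
  le_of_tendsto_of_tendsto ((hw.norm.mul hv.norm).const_mul δ) (hw.inner hv) h

lemma inner_mul_one_add_I_nonneg (hδ : 0 ≤ δ) (hw : w ∈ deltaCone δ e) :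
    0 ≤ ⟪w, e * (1 + δ * I)⟫_ℝ := by
  have hI : ⟪w, e * (1 + δ * I)⟫_ℝ = ⟪w, e⟫_ℝ + δ * ⟪w, e * I⟫_ℝ := by
    rw [show e * (1 + δ * I) = e + δ • (e * I) by rw [real_smul]; ring, inner_add_right,
      real_inner_smul_right]
  have hCS : -(‖w‖ * ‖e‖) ≤ ⟪w, e * I⟫_ℝ := by
    simpa [norm_mul] using neg_le_of_abs_le (abs_real_inner_le_norm w (e * I))
  have hw : δ * (‖w‖ * ‖e‖) ≤ ⟪w, e⟫_ℝ := hw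
  rw [hI]
  nlinarith

lemma eq_zero_of_mem_deltaCone_of_neg_mem (hδ : 0 < δ) (he : e ≠ 0) (hw : w ∈ deltaCone δ e)
    (hw' : -w ∈ deltaCone δ (e * (1 + δ * I))) : w = 0 := by
  have hr : e * (1 + δ * I) ≠ 0 := mul_ne_zero he fun h => by simpa using congrArg re h
  have := inner_mul_one_add_I_nonneg hδ.le hw
  simp only [deltaCone, mem_ofPred_eq, norm_neg, inner_neg_left] at hw'
  have : ‖w‖ * ‖e * (1 + δ * I)‖ = 0 := by nlinarith [norm_nonneg w, norm_nonneg (e * (1 + δ * I))]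
  exact norm_eq_zero.1 ((mul_eq_zero.1 this).resolve_right (norm_ne_zero_iff.2 hr))

lemma eq_zero_of_forall_mem_deltaCone_mul_pow (hδ : 0 < δ) (he : e ≠ 0) {r : ℂ} (hr : r.im ≠ 0)
    (h : ∀ k : ℕ, w ∈ deltaCone δ (e * r ^ k)) : w = 0 := by
  have hr0 : ‖r‖ ≠ 0 := norm_ne_zero_iff.2 fun h0 => hr (by simp [h0])
  set u : ℂ := (‖r‖⁻¹ : ℝ) • r
  have hu : ‖u‖ = 1 := by simp [u, hr0]
  have hu1 : u ≠ 1 := fun h1 => hr (by simpa [u, hr0] using congrArg im h1)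
  have hk (k : ℕ) : δ * (‖w‖ * ‖e‖) ≤ ⟪w, e * u ^ k⟫_ℝ := by
    have := smul_mem_deltaCone (pow_nonneg (inv_nonneg.2 (norm_nonneg r)) k) (h k)
    rwa [← mul_smul_comm, ← smul_pow, deltaCone, mem_ofPred_eq, norm_mul, norm_pow, hu, one_pow,
      mul_one] at this
  have hsum (N : ℕ) : N * (δ * (‖w‖ * ‖e‖)) ≤ ‖w‖ * ‖e‖ * (2 / ‖u - 1‖) := calc
    N * (δ * (‖w‖ * ‖e‖)) = ∑ k ∈ Finset.range N, δ * (‖w‖ * ‖e‖) := by simp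
    _ ≤ ∑ k ∈ Finset.range N, ⟪w, e * u ^ k⟫_ℝ := Finset.sum_le_sum fun k _ => hk k
    _ = ⟪w, e * ∑ k ∈ Finset.range N, u ^ k⟫_ℝ := by rw [Finset.mul_sum, inner_sum]
    _ ≤ ‖w‖ * ‖e * ∑ k ∈ Finset.range N, u ^ k‖ := real_inner_le_norm _ _
    _ ≤ ‖w‖ * ‖e‖ * (2 / ‖u - 1‖) := by
      rw [norm_mul, geom_sum_eq hu1, norm_div, mul_assoc]
      gcongr
      calc ‖u ^ N - 1‖ ≤ ‖u ^ N‖ + ‖(1 : ℂ)‖ := norm_sub_le _ _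
        _ = 2 := by rw [norm_pow, hu]; norm_num
  by_contra hw
  have hpos : 0 < ‖w‖ * ‖e‖ := by positivity
  obtain ⟨N, hN⟩ := exists_nat_gt (2 / ‖u - 1‖ / δ)
  have := hsum N
  rw [div_lt_iff₀ hδ] at hN
  nlinarith

end deltaCone

lemma cauchySeq_of_mul_dist_le_sub {X : Type*} [PseudoMetricSpace X] {ψ : ℕ → X} {φ : ℕ → ℝ}
    {c : ℝ} (hc : 0 < c) (h : ∀ n, c * dist (ψ n) (ψ (n + 1)) ≤ φ (n + 1) - φ n)
    (hφ : BddAbove (range φ)) : CauchySeq ψ := by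
  obtain ⟨M, hM⟩ := hφ
  have hd (n : ℕ) : dist (ψ n) (ψ (n + 1)) ≤ (φ (n + 1) - φ n) / c := by
    rw [le_div_iff₀ hc]; linarith [h n]
  refine cauchySeq_of_dist_le_of_summable _ hd <| summable_of_sum_range_le
    (fun n => dist_nonneg.trans (hd n)) (c := (M - φ 0) / c) fun N => ?_
  rw [← Finset.sum_div, Finset.sum_range_sub φ]
  gcongr
  exact hM ⟨N, rfl⟩

lemma tendsto_add_inv_succ_smul (s e : ℂ) :
    Tendsto (fun n : ℕ => s + ((n : ℝ) + 1)⁻¹ • e) atTop (𝓝 s) := by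
  simpa using
    tendsto_const_nhds.add ((tendsto_one_div_add_atTop_nhds_zero_nat (𝕜 := ℝ)).smul_const e)

lemma exists_lipschitzWith_range_eq_graph {α : Type*} {h : α → ℂ} {K : NNReal}
    (hK : ∀ a b, ‖h a - h b‖ ≤ K * |(h a).re - (h b).re|)
    (hs : Function.Surjective fun a => (h a).re) :
    ∃ g : ℝ → ℝ, LipschitzWith K g ∧ range h = range fun u : ℝ => (u : ℂ) + I * (g u : ℂ) := by
  set σ := Function.surjInv hs
  have hσ (u : ℝ) : (h (σ u)).re = u := Function.surjInv_eq hs u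
  have hgraph (a : α) : h a = (h a).re + I * (h (σ (h a).re)).im := by
    have hK' := hK (σ (h a).re) a
    rw [hσ, sub_self, abs_zero, mul_zero, norm_le_zero_iff, sub_eq_zero] at hK'
    rw [hK', mul_comm, re_add_im]
  refine ⟨fun u => (h (σ u)).im, LipschitzWith.of_dist_le_mul fun u v => ?_, ?_⟩
  · calc dist (h (σ u)).im (h (σ v)).im ≤ ‖h (σ u) - h (σ v)‖ := by
          simpa [Real.dist_eq] using abs_im_le_norm (h (σ u) - h (σ v))
      _ ≤ K * dist u v := by simpa [hσ, Real.dist_eq] using hK (σ u) (σ v)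
  · ext w
    constructor
    · rintro ⟨a, rfl⟩
      exact ⟨(h a).re, (hgraph a).symm⟩
    · rintro ⟨u, rfl⟩
      exact ⟨σ u, by rw [hgraph (σ u), hσ]⟩

lemma DeltaMonotone.exists_deltaMonotoneWith {f : ℂ → ℂ} (hf : DeltaMonotone f) :
    ∃ δ > 0, DeltaMonotoneWith δ f := by
  obtain ⟨δ, hδ, hf⟩ := hf
  refine ⟨δ, hδ, fun z ζ => ?_⟩
  rcases eq_or_ne z ζ with rfl | hne
  · simp [deltaCone]
  have hv : 0 < ‖z - ζ‖ := norm_pos_iff.2 (sub_ne_zero.2 hne)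
  have hre : ((f z - f ζ) / (z - ζ)).re * ‖z - ζ‖ ^ 2 = ⟪f z - f ζ, z - ζ⟫_ℝ := by
    have : normSq (z - ζ) ≠ 0 := normSq_eq_zero.not.2 (sub_ne_zero.2 hne)
    rw [div_re, ← normSq_eq_norm_sq, Complex.inner, mul_re, conj_re, conj_im]
    field_simp
    ring
  calc δ * (‖f z - f ζ‖ * ‖z - ζ‖) = δ * (‖f z - f ζ‖ / ‖z - ζ‖) * ‖z - ζ‖ ^ 2 := by
        field_simp
    _ ≤ _ := hre ▸ mul_le_mul_of_nonneg_right (hf z ζ hne) (sq_nonneg _)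

namespace DeltaMonotoneWith

variable {δ : ℝ} {e : ℂ} {f : ℂ → ℂ}

lemma neg_comp_neg (hf : DeltaMonotoneWith δ f) : DeltaMonotoneWith δ (fun z => -f (-z)) :=
  fun z ζ => by simpa only [neg_sub_neg] using hf (-ζ) (-z)

lemma mul_norm_sub_le_inner (hf : DeltaMonotoneWith δ f) (z e : ℂ) {t t' : ℝ} (htt' : t ≤ t') :
    δ * ‖e‖ * ‖f (z + t' • e) - f (z + t • e)‖ ≤ ⟪f (z + t' • e) - f (z + t • e), e⟫_ℝ := by
  rcases htt'.lt_or_eq with hlt | rfl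
  · have h := hf (z + t' • e) (z + t • e)
    rw [add_sub_add_left_eq_sub, ← sub_smul, deltaCone, mem_ofPred_eq, norm_smul,
      Real.norm_of_nonneg (sub_nonneg.2 htt'), real_inner_smul_right] at h
    nlinarith [sub_pos.2 hlt]
  · simp

lemma mul_norm_sub_le_re_sub (hf : DeltaMonotoneWith δ f) {a b : ℝ} (hab : a ≤ b) :
    δ * ‖f b - f a‖ ≤ (f b).re - (f a).re := by
  simpa [Complex.inner] using hf.mul_norm_sub_le_inner 0 1 hab

lemma mul_norm_sub_le_abs_re_sub (hf : DeltaMonotoneWith δ f) (a b : ℝ) :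
    δ * ‖f a - f b‖ ≤ |(f a).re - (f b).re| := by
  rcases le_total a b with hab | hab
  · rw [norm_sub_rev, abs_sub_comm]
    exact (hf.mul_norm_sub_le_re_sub hab).trans (le_abs_self _)
  · exact (hf.mul_norm_sub_le_re_sub hab).trans (le_abs_self _)

lemma exists_tendsto_of_bddAbove (hδ : 0 < δ) (hf : DeltaMonotoneWith δ f) (he : e ≠ 0) {z : ℂ}
    {t : ℕ → ℝ} (ht : Monotone t) (hb : BddAbove (range fun n => ⟪f (z + t n • e), e⟫_ℝ)) :
    ∃ G, Tendsto (fun n => f (z + t n • e)) atTop (𝓝 G) := by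
  refine cauchySeq_tendsto_of_complete <|
    cauchySeq_of_mul_dist_le_sub (c := δ * ‖e‖) (by positivity) (fun n => ?_) hb
  rw [dist_comm, dist_eq_norm, ← inner_sub_left]
  exact hf.mul_norm_sub_le_inner z e (ht n.le_succ)

lemma sub_mem_deltaCone_of_tendsto_atTop (hf : DeltaMonotoneWith δ f) {z₀ G : ℂ} {t : ℕ → ℝ}
    (ht : Tendsto t atTop atTop) (hG : Tendsto (fun n => f (z₀ + t n • e)) atTop (𝓝 G)) (z : ℂ) :
    G - f z ∈ deltaCone δ e := by
  refine mem_deltaCone_of_tendsto (hG.sub_const (f z)) (v := fun n => (t n)⁻¹ • (z₀ + t n • e - z))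
    ?_ ?_
  · have hlim := (ht.inv_tendsto_atTop.smul_const (z₀ - z)).add_const e
    rw [zero_smul, zero_add] at hlim
    refine hlim.congr' ?_
    filter_upwards [ht.eventually_gt_atTop 0] with n hn
    rw [Pi.inv_apply, add_sub_right_comm, smul_add, smul_smul, inv_mul_cancel₀ hn.ne', one_smul]
  · filter_upwards [ht.eventually_gt_atTop 0] with n hn
    exact smul_mem_deltaCone (inv_nonneg.2 hn.le) (hf _ _)

lemma sub_mem_deltaCone_of_tendsto (hf : DeltaMonotoneWith δ f) {ι : Type*} {l : Filter ι}
    [l.NeBot] {ξ : ι → ℂ} {a W : ℂ} (hξ : Tendsto ξ l (𝓝 a))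
    (hW : Tendsto (fun i => f (ξ i)) l (𝓝 W)) (z : ℂ) : f z - W ∈ deltaCone δ (z - a) :=
  mem_deltaCone_of_tendsto (tendsto_const_nhds.sub hW) (tendsto_const_nhds.sub hξ)
    (Eventually.of_forall fun i => hf z (ξ i))

lemma sub_mem_deltaCone_mul_of_tendsto (hδ : 0 < δ) (hf : DeltaMonotoneWith δ f) (he : e ≠ 0)
    {p : ℕ → ℂ} {F : ℂ} (hF : Tendsto (fun n => f (p n)) atTop (𝓝 F))
    (hcone : ∀ z, F - f z ∈ deltaCone δ e) (z : ℂ) :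
    F - f z ∈ deltaCone δ (e * (1 + δ * I)) := by
  set e' := e * (1 + δ * I)
  have he' : e' ≠ 0 := mul_ne_zero he fun h => by simpa using congrArg re h
  have hb (z : ℂ) : ⟪f z, e'⟫_ℝ ≤ ⟪F, e'⟫_ℝ := by
    have := inner_mul_one_add_I_nonneg hδ.le (hcone z)
    rw [inner_sub_left] at this
    linarith
  obtain ⟨G, hG⟩ := hf.exists_tendsto_of_bddAbove hδ he' (z := 0) Nat.mono_cast
    ⟨⟪F, e'⟫_ℝ, by rintro _ ⟨n, rfl⟩; exact hb _⟩
  have hGcone := hf.sub_mem_deltaCone_of_tendsto_atTop tendsto_natCast_atTop_atTop hG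
  have hFG : F = G := by
    refine sub_eq_zero.1 (eq_zero_of_mem_deltaCone_of_neg_mem hδ he ?_ ?_)
    · exact mem_deltaCone_of_tendsto (tendsto_const_nhds.sub hG) tendsto_const_nhds
        (Eventually.of_forall fun n => hcone _)
    · rw [neg_sub]
      exact mem_deltaCone_of_tendsto (tendsto_const_nhds.sub hF) tendsto_const_nhds
        (Eventually.of_forall fun n => hGcone _)
  rw [hFG]
  exact hGcone z

theorem eq_of_bddAbove_inner (hδ : 0 < δ) (hf : DeltaMonotoneWith δ f) (he : e ≠ 0) {z₀ : ℂ}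
    (hb : BddAbove (range fun n : ℕ => ⟪f (z₀ + (n : ℝ) • e), e⟫_ℝ)) (z ζ : ℂ) : f z = f ζ := by
  obtain ⟨F, hF⟩ := hf.exists_tendsto_of_bddAbove hδ he Nat.mono_cast hb
  have hr : (1 + δ * I).im ≠ 0 := by simpa using hδ.ne'
  have hcone (k : ℕ) : ∀ z, F - f z ∈ deltaCone δ (e * (1 + δ * I) ^ k) := by
    induction k with
    | zero => simpa using hf.sub_mem_deltaCone_of_tendsto_atTop tendsto_natCast_atTop_atTop hF
    | succ k ih =>
      rw [pow_succ, ← mul_assoc]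
      exact hf.sub_mem_deltaCone_mul_of_tendsto hδ
        (mul_ne_zero he (pow_ne_zero _ fun h => hr (by simp [h]))) hF ih
  have hF (z : ℂ) : f z = F :=
    (sub_eq_zero.1 (eq_zero_of_forall_mem_deltaCone_mul_pow hδ he hr fun k => hcone k z)).symm
  rw [hF z, hF ζ]

lemma tendsto_re_atTop (hδ : 0 < δ) (hf : DeltaMonotoneWith δ f) (hnc : ∃ z ζ, f z ≠ f ζ) :
    Tendsto (fun x : ℝ => (f x).re) atTop atTop := by
  have hmono : Monotone fun x : ℝ => (f x).re := fun a b hab =>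
    sub_nonneg.1 <| (mul_nonneg hδ.le (norm_nonneg _)).trans (hf.mul_norm_sub_le_re_sub hab)
  refine hmono.tendsto_atTop_atTop fun M => ?_
  by_contra! h
  obtain ⟨z, ζ, hne⟩ := hnc
  exact hne (hf.eq_of_bddAbove_inner hδ one_ne_zero (z₀ := 0)
    ⟨M, by rintro _ ⟨n, rfl⟩; simpa [Complex.inner] using (h n).le⟩ z ζ)

lemma norm_le_of_norm_sub_le (hδ : 0 ≤ δ) (hf : DeltaMonotoneWith δ f) {s z : ℂ}
    (hz : ‖z - s‖ ≤ 1 / 4) :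
    ‖f z‖ ≤ 5 / 2 * (‖f (s + 1)‖ + ‖f (s + -1)‖ + ‖f (s + I)‖ + ‖f (s + -I)‖) := by
  have key (e : ℂ) (he : ‖e‖ = 1) : ⟪f z, e⟫_ℝ ≤ ‖f z‖ / 4 + 5 / 4 * ‖f (s + e)‖ := by
    have hmono : 0 ≤ ⟪f z - f (s + e), z - (s + e)⟫_ℝ :=
      (mul_nonneg hδ (by positivity)).trans (hf _ _)
    have h₁ : ⟪f (s + e), e - (z - s)⟫_ℝ ≤ ‖f (s + e)‖ * (5 / 4) := by
      refine (real_inner_le_norm _ _).trans (mul_le_mul_of_nonneg_left ?_ (norm_nonneg _))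
      linarith [norm_sub_le e (z - s)]
    have h₂ : ⟪f z, z - s⟫_ℝ ≤ ‖f z‖ / 4 := by
      nlinarith [real_inner_le_norm (f z) (z - s), norm_nonneg (f z)]
    rw [show z - (s + e) = -(e - (z - s)) by ring, inner_neg_right, inner_sub_left] at hmono
    rw [inner_sub_right] at hmono
    linarith
  have h₁ : (f z).re ≤ ‖f z‖ / 4 + 5 / 4 * ‖f (s + 1)‖ := by
    simpa [Complex.inner] using key 1 (by simp)
  have h₂ : -(f z).re ≤ ‖f z‖ / 4 + 5 / 4 * ‖f (s + -1)‖ := by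
    simpa [Complex.inner] using key (-1) (by simp)
  have h₃ : (f z).im ≤ ‖f z‖ / 4 + 5 / 4 * ‖f (s + I)‖ := by
    simpa [Complex.inner] using key I (by simp)
  have h₄ : -(f z).im ≤ ‖f z‖ / 4 + 5 / 4 * ‖f (s + -I)‖ := by
    simpa [Complex.inner] using key (-I) (by simp)
  have hre : |(f z).re| ≤ ‖f z‖ / 4 + 5 / 4 * (‖f (s + 1)‖ + ‖f (s + -1)‖) :=
    abs_le'.2 ⟨by linarith [norm_nonneg (f (s + -1))], by linarith [norm_nonneg (f (s + 1))]⟩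
  have him : |(f z).im| ≤ ‖f z‖ / 4 + 5 / 4 * (‖f (s + I)‖ + ‖f (s + -I)‖) :=
    abs_le'.2 ⟨by linarith [norm_nonneg (f (s + -I))], by linarith [norm_nonneg (f (s + I))]⟩
  linarith [norm_le_abs_re_add_abs_im (f z)]

lemma exists_tendsto_inv_succ_smul (hδ : 0 < δ) (hf : DeltaMonotoneWith δ f) (he : e ≠ 0)
    (s : ℂ) : ∃ V, Tendsto (fun n : ℕ => f (s + ((n : ℝ) + 1)⁻¹ • e)) atTop (𝓝 V) := by
  -- view `s + (n + 1)⁻¹ • e` as the point at the increasing time `-(n + 1)⁻¹` of the ray along `-e`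
  have ht : Monotone fun n : ℕ => -((n : ℝ) + 1)⁻¹ := fun m n hmn =>
    neg_le_neg (inv_anti₀ (by positivity) (by gcongr))
  have hb (n : ℕ) : ⟪f (s + (-((n : ℝ) + 1)⁻¹) • -e), -e⟫_ℝ ≤ ⟪f s, -e⟫_ℝ := by
    have := hf.mul_norm_sub_le_inner s (-e) (t := -((n : ℝ) + 1)⁻¹) (t' := 0)
      (neg_nonpos.2 (by positivity))
    rw [zero_smul, add_zero, inner_sub_left] at this
    linarith [mul_nonneg (mul_nonneg hδ.le (norm_nonneg (-e)))
      (norm_nonneg (f s - f (s + (-((n : ℝ) + 1)⁻¹) • -e)))]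
  simpa only [neg_smul_neg] using
    hf.exists_tendsto_of_bddAbove hδ (neg_ne_zero.2 he) ht ⟨_, by rintro _ ⟨n, rfl⟩; exact hb n⟩

lemma sub_mem_deltaCone_of_tendsto_inv_succ_smul (hf : DeltaMonotoneWith δ f) {s V W : ℂ}
    (hV : Tendsto (fun n : ℕ => f (s + ((n : ℝ) + 1)⁻¹ • e)) atTop (𝓝 V)) {ι : Type*}
    {l : Filter ι} [l.NeBot] {ξ : ι → ℂ} (hξ : Tendsto ξ l (𝓝 s))
    (hW : Tendsto (fun i => f (ξ i)) l (𝓝 W)) : V - W ∈ deltaCone δ e := by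
  refine mem_deltaCone_of_tendsto (hV.sub_const W) tendsto_const_nhds
    (Eventually.of_forall fun n => ?_)
  have := smul_mem_deltaCone (c := (n : ℝ) + 1) (by positivity)
    (hf.sub_mem_deltaCone_of_tendsto hξ hW (s + ((n : ℝ) + 1)⁻¹ • e))
  rwa [add_sub_cancel_left, smul_smul, mul_inv_cancel₀ (by positivity), one_smul] at this

theorem eq_of_tendsto (hδ : 0 < δ) (hf : DeltaMonotoneWith δ f) {ι : Type*} {l : Filter ι}
    [l.NeBot] {ξ : ι → ℂ} {s W : ℂ} (hξ : Tendsto ξ l (𝓝 s))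
    (hW : Tendsto (fun i => f (ξ i)) l (𝓝 W)) : W = f s := by
  have hr : (1 + δ * I).im ≠ 0 := by simpa using hδ.ne'
  have hr0 (k : ℕ) : (1 + δ * I) ^ k ≠ 0 := pow_ne_zero _ fun h => hr (by simp [h])
  choose V hV using fun k => hf.exists_tendsto_inv_succ_smul hδ (hr0 k) s
  have hVk (k : ℕ) : V k = V 0 := by
    induction k with
    | zero => rfl
    | succ k ih =>
      rw [← ih]
      refine (sub_eq_zero.1 (eq_zero_of_mem_deltaCone_of_neg_mem hδ (hr0 k) ?_ ?_)).symm
      · exact hf.sub_mem_deltaCone_of_tendsto_inv_succ_smul (hV k)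
          (tendsto_add_inv_succ_smul s _) (hV (k + 1))
      · rw [neg_sub, ← pow_succ]
        exact hf.sub_mem_deltaCone_of_tendsto_inv_succ_smul (hV (k + 1))
          (tendsto_add_inv_succ_smul s _) (hV k)
  have key (ξ : ι → ℂ) (W : ℂ) (hξ : Tendsto ξ l (𝓝 s))
      (hW : Tendsto (fun i => f (ξ i)) l (𝓝 W)) : W = V 0 := by
    refine (sub_eq_zero.1 <|
      eq_zero_of_forall_mem_deltaCone_mul_pow hδ one_ne_zero hr fun k => ?_).symm
    rw [one_mul, ← hVk k]
    exact hf.sub_mem_deltaCone_of_tendsto_inv_succ_smul (hV k) hξ hW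
  rw [key ξ W hξ hW, key (fun _ => s) (f s) tendsto_const_nhds tendsto_const_nhds]

theorem continuousAt (hδ : 0 < δ) (hf : DeltaMonotoneWith δ f) (s : ℂ) : ContinuousAt f s := by
  have hC : ∀ᶠ z in 𝓝 s, f z ∈ Metric.closedBall 0
      (5 / 2 * (‖f (s + 1)‖ + ‖f (s + -1)‖ + ‖f (s + I)‖ + ‖f (s + -I)‖)) := by
    filter_upwards [Metric.closedBall_mem_nhds s (by norm_num : (0 : ℝ) < 1 / 4)] with z hz
    rw [mem_closedBall_zero_iff]
    exact hf.norm_le_of_norm_sub_le hδ.le (by rwa [Metric.mem_closedBall, dist_eq_norm] at hz)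
  refine tendsto_of_subseq_tendsto fun ξ hξ => ?_
  obtain ⟨W, -, φ, hφ, hW⟩ :=
    (isCompact_closedBall _ _).tendsto_subseq' (hξ.eventually hC).frequently
  exact ⟨φ, hf.eq_of_tendsto hδ (hξ.comp hφ.tendsto_atTop) hW ▸ hW⟩

lemma surjective_re_comp_ofReal (hδ : 0 < δ) (hf : DeltaMonotoneWith δ f)
    (hnc : ∃ z ζ, f z ≠ f ζ) : Function.Surjective fun x : ℝ => (f x).re := by
  have hcont : Continuous fun x : ℝ => (f x).re :=
    continuous_re.comp <| continuous_iff_continuousAt.2 fun x =>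
      (hf.continuousAt hδ x).comp continuous_ofReal.continuousAt
  obtain ⟨z, ζ, hne⟩ := hnc
  have hbot := tendsto_neg_atTop_atBot.comp <|
    (hf.neg_comp_neg.tendsto_re_atTop hδ ⟨-z, -ζ, by simpa using hne⟩).comp tendsto_neg_atBot_atTop
  exact hcont.surjective (hf.tendsto_re_atTop hδ ⟨z, ζ, hne⟩)
    (by simpa [Function.comp_def] using hbot)

end DeltaMonotoneWith

/-- The image of the real line under a nonconstant delta-monotone map is a Lipschitz graph. -/
theorem deltaMonotone_image_real_line_is_lipschitz_graph
    (f : ℂ → ℂ) (hf : DeltaMonotone f) (hnc : ∃ z ζ : ℂ, f z ≠ f ζ) :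
    ∃ L : NNReal, ∃ g : ℝ → ℝ, LipschitzWith L g ∧
      f '' (Set.range (Complex.ofReal)) =
        Set.range (fun u : ℝ => (u : ℂ) + Complex.I * (g u : ℂ)) := by
  obtain ⟨δ, hδ, hf⟩ := hf.exists_deltaMonotoneWith
  obtain ⟨g, hg, hrange⟩ := exists_lipschitzWith_range_eq_graph (K := ⟨δ⁻¹, inv_nonneg.2 hδ.le⟩)
    (fun a b => (le_inv_mul_iff₀ hδ).2 (hf.mul_norm_sub_le_abs_re_sub a b))
    (hf.surjective_re_comp_ofReal hδ hnc)
  exact ⟨_, g, hg, by rw [← range_comp]; exact hrange⟩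
end

section
/- Let f : ℂ → ℂ and let η : [0,∞) → [0,∞) be a homeomorphism such that for every λ ∈ ℝ the map f_λ(z) = f(z) + iλz is η-quasisymmetric on ℂ. Then for every triple of distinct points a, b, x ∈ ℝ, setting τ = (x − a)/(x − b), one has |f(x) − f(a) − i τ Im(f(x) − f(b))| ≤ η(|τ|) |Re(f(x) − f(b))|. In particular, taking real parts, |Re(f(x) − f(a))| ≤ η(|τ|) |Re(f(x) − f(b))|. -/
open Set

/-- `η` is (the restriction of) a homeomorphism of `[0, ∞)` onto itself. -/
def IsQSGauge (η : ℝ → ℝ) : Prop :=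
  StrictMonoOn η (Ici 0) ∧ ContinuousOn η (Ici 0) ∧
    MapsTo η (Ici 0) (Ici 0) ∧ SurjOn η (Ici 0) (Ici 0)

/-!
On the real line the shear `z ↦ iλz` only moves the imaginary parts of the increments of `f`.
Choosing `λ = -Im(f(x) − f(b))/(x − b)` makes the increment of `f_λ` over `[b, x]` real, equal to
`Re(f(x) − f(b))`, while its increment over `[a, x]` becomes `f(x) − f(a) − iτ Im(f(x) − f(b))`;
quasisymmetry of this single `f_λ` is the first inequality, and `|Re w| ≤ |w|` gives the second.
-/

namespace Complex

theorem sub_I_mul_im (w : ℂ) : w - I * (w.im : ℂ) = w.re := by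
  linear_combination -re_add_im w

theorem sub_I_mul_ofReal_re (w : ℂ) (r : ℝ) : (w - I * r).re = w.re := by
  simp

theorem norm_ofReal_sub_div_norm_ofReal_sub (x a b : ℝ) :
    ‖(x : ℂ) - a‖ / ‖(x : ℂ) - b‖ = |(x - a) / (x - b)| := by
  rw [← ofReal_sub, ← ofReal_sub, norm_real, norm_real, Real.norm_eq_abs, Real.norm_eq_abs,
    abs_div]

theorem shear_sub_shear_ofReal (f : ℂ → ℂ) (m x a b : ℝ) :
    (f x + I * ((-m / (x - b) : ℝ) : ℂ) * x) - (f a + I * ((-m / (x - b) : ℝ) : ℂ) * a) =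
      (f x - f a) - I * (((x - a) / (x - b) * m : ℝ) : ℂ) := by
  push_cast
  ring

theorem shear_sub_shear_ofReal_eq_re (f : ℂ → ℂ) {x b : ℝ} (hxb : x ≠ b) :
    (f x + I * ((-(f x - f b).im / (x - b) : ℝ) : ℂ) * x) -
        (f b + I * ((-(f x - f b).im / (x - b) : ℝ) : ℂ) * b) = ((f x - f b).re : ℂ) := by
  rw [shear_sub_shear_ofReal, div_self (sub_ne_zero.2 hxb), one_mul, sub_I_mul_im]

end Complex

open Complex

theorem reduced_qs_inequality_on_real_line_general
    (f : ℂ → ℂ) (η : ℝ → ℝ)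
    (hqs : ∀ lam : ℝ, ∀ x a b : ℂ, x ≠ a → x ≠ b → a ≠ b →
      ‖(f x + Complex.I * (lam : ℂ) * x) - (f a + Complex.I * (lam : ℂ) * a)‖ ≤
        η (‖x - a‖ / ‖x - b‖) *
          ‖(f x + Complex.I * (lam : ℂ) * x) - (f b + Complex.I * (lam : ℂ) * b)‖) :
    ∀ a b x : ℝ, x ≠ a → x ≠ b → a ≠ b →
      ‖(f x - f a) -
          Complex.I * ((((x - a) / (x - b)) * (f (x : ℂ) - f (b : ℂ)).im : ℝ) : ℂ)‖ ≤
        η (|(x - a) / (x - b)|) * |(f (x : ℂ) - f (b : ℂ)).re| ∧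
      |(f (x : ℂ) - f (a : ℂ)).re| ≤
        η (|(x - a) / (x - b)|) * |(f (x : ℂ) - f (b : ℂ)).re| := by
  intro a b x hxa hxb hab
  have key := hqs (-(f x - f b).im / (x - b)) x a b (mod_cast hxa) (mod_cast hxb) (mod_cast hab)
  rw [shear_sub_shear_ofReal, shear_sub_shear_ofReal_eq_re f hxb,
    norm_ofReal_sub_div_norm_ofReal_sub, norm_real, Real.norm_eq_abs] at key
  refine ⟨key, le_trans ?_ key⟩
  rw [← sub_I_mul_ofReal_re (f x - f a) ((x - a) / (x - b) * (f x - f b).im)]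
  exact abs_re_le_norm _

/-- If `f_λ(z) = f(z) + iλz` is `η`-quasisymmetric on `ℂ` for every `λ ∈ ℝ`, then for every
triple of distinct real points `a, b, x`, with `τ = (x − a)/(x − b)`, one has
`|f(x) − f(a) − iτ Im(f(x) − f(b))| ≤ η(|τ|)|Re(f(x) − f(b))|`, and in particular
`|Re(f(x) − f(a))| ≤ η(|τ|)|Re(f(x) − f(b))|`. -/
theorem reduced_qs_inequality_on_real_line
    (f : ℂ → ℂ) (η : ℝ → ℝ) (hη : IsQSGauge η)
    (hqs : ∀ lam : ℝ, ∀ x a b : ℂ, x ≠ a → x ≠ b → a ≠ b →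
      ‖(f x + Complex.I * (lam : ℂ) * x) - (f a + Complex.I * (lam : ℂ) * a)‖ ≤
        η (‖x - a‖ / ‖x - b‖) *
          ‖(f x + Complex.I * (lam : ℂ) * x) - (f b + Complex.I * (lam : ℂ) * b)‖) :
    ∀ a b x : ℝ, x ≠ a → x ≠ b → a ≠ b →
      ‖(f x - f a) -
          Complex.I * ((((x - a) / (x - b)) * (f (x : ℂ) - f (b : ℂ)).im : ℝ) : ℂ)‖ ≤
        η (|(x - a) / (x - b)|) * |(f (x : ℂ) - f (b : ℂ)).re| ∧
      |(f (x : ℂ) - f (a : ℂ)).re| ≤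
        η (|(x - a) / (x - b)|) * |(f (x : ℂ) - f (b : ℂ)).re| :=
  reduced_qs_inequality_on_real_line_general f η hqs
end

section
/- Let g : ℝ → ℝ be continuous, let Ω = {z ∈ ℂ : Im z > g(Re z)} be the domain above the graph of g, and let f : ℍ → Ω be a biholomorphic map which extends to a homeomorphism from the closure of ℍ in ℂ onto the closure of Ω in ℂ. Then Re f'(z) > 0 for every z ∈ ℍ. -/
/-!
For `t > 0` the translation `w ↦ w + t i` maps the closure of `Ω` into `Ω`, so
`h_t = f⁻¹ ∘ (· + t i) ∘ f` is a holomorphic self-map of `ℍ` without fixed points which extends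
continuously to every real point with a value in `ℍ`. By Wolff's lemma (proved on the disc from the
fixed points of `ρ φ`, `ρ < 1`, and the Schwarz–Pick lemma, then moved to `ℍ` by the Cayley map)
`h_t` maps every horodisc at some boundary point into itself. A finite such point `x` is impossible,
since `h_t (x + ε i)` tends to a point of `ℍ` while the horodiscs at `x` through `x + ε i` shrink to
`x`. So the point is `∞`, that is `Im h_t z ≥ Im z`, and the difference quotients
`t i / (h_t z - z)` of `f` have nonnegative real part, whence `Re f' ≥ 0`. If `Re f'` vanished at
a point, the minimum principle would make `f` affine with purely imaginary slope, and such a map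
sends `ℍ` onto a half-plane that does not lie above a graph.
-/

open Set Metric Filter Complex Topology ComplexConjugate

theorem normSq_lt_one_iff {z : ℂ} : normSq z < 1 ↔ ‖z‖ < 1 := by
  rw [← Complex.sq_norm]; exact pow_lt_one_iff_of_nonneg (norm_nonneg z) two_ne_zero

noncomputable def discMobius (a z : ℂ) : ℂ := (a - z) / (1 - conj a * z)

section DiscMobius

variable {a z : ℂ}

theorem normSq_one_sub_conj_mul_sub_normSq_sub (a z : ℂ) :
    normSq (1 - conj a * z) - normSq (a - z) = (1 - normSq a) * (1 - normSq z) := by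
  simp only [normSq_apply, sub_re, sub_im, mul_re, mul_im, one_re, one_im, conj_re, conj_im]
  ring

theorem one_sub_conj_mul_ne_zero (ha : ‖a‖ < 1) (hz : ‖z‖ ≤ 1) : 1 - conj a * z ≠ 0 := by
  refine sub_ne_zero.2 fun h => ?_
  have : ‖conj a * z‖ < 1 := by
    rw [norm_mul, RCLike.norm_conj]
    exact (mul_le_of_le_one_right (norm_nonneg a) hz).trans_lt ha
  simp [← h] at this

theorem one_sub_normSq_discMobius (ha : ‖a‖ < 1) (hz : ‖z‖ ≤ 1) :
    1 - normSq (discMobius a z) = (1 - normSq a) * (1 - normSq z) / normSq (1 - conj a * z) := by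
  have hN : normSq (1 - conj a * z) ≠ 0 := normSq_eq_zero.not.2 (one_sub_conj_mul_ne_zero ha hz)
  rw [discMobius, normSq_div, ← normSq_one_sub_conj_mul_sub_normSq_sub, sub_div, div_self hN]

theorem norm_discMobius_lt_one (ha : ‖a‖ < 1) (hz : ‖z‖ < 1) : ‖discMobius a z‖ < 1 := by
  have : 0 < 1 - normSq (discMobius a z) := by
    rw [one_sub_normSq_discMobius ha hz.le]
    exact div_pos (mul_pos (sub_pos.2 (normSq_lt_one_iff.2 ha))
      (sub_pos.2 (normSq_lt_one_iff.2 hz))) (normSq_pos.2 (one_sub_conj_mul_ne_zero ha hz.le))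
  exact normSq_lt_one_iff.1 (sub_pos.1 this)

theorem discMobius_self (a : ℂ) : discMobius a a = 0 := by simp [discMobius]

theorem discMobius_eq_zero_iff (ha : ‖a‖ < 1) (hz : ‖z‖ ≤ 1) : discMobius a z = 0 ↔ a = z := by
  simp [discMobius, one_sub_conj_mul_ne_zero ha hz, sub_eq_zero]

theorem discMobius_discMobius (ha : ‖a‖ < 1) (hz : ‖z‖ < 1) :
    discMobius a (discMobius a z) = z := by
  have h₁ : 1 - z * conj a ≠ 0 := mul_comm z (conj a) ▸ one_sub_conj_mul_ne_zero ha hz.le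
  have h₂ := one_sub_conj_mul_ne_zero ha (norm_discMobius_lt_one ha hz).le
  have key : a - discMobius a z = z * (1 - conj a * discMobius a z) := by
    rw [discMobius]
    field_simp
    ring
  rw [discMobius, key, mul_div_cancel_right₀ _ h₂]

theorem mapsTo_discMobius (ha : ‖a‖ < 1) : MapsTo (discMobius a) (ball 0 1) (ball 0 1) :=
  fun _ hz => mem_ball_zero_iff.2 (norm_discMobius_lt_one ha (mem_ball_zero_iff.1 hz))

theorem differentiableOn_discMobius (ha : ‖a‖ < 1) :
    DifferentiableOn ℂ (discMobius a) (ball 0 1) := fun _ hz =>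
  ((differentiableAt_const a).sub differentiableAt_id |>.div
    ((differentiableAt_const 1).sub ((differentiableAt_const _).mul differentiableAt_id))
    (one_sub_conj_mul_ne_zero ha (mem_ball_zero_iff.1 hz).le)).differentiableWithinAt

theorem norm_discMobius_map_le {φ : ℂ → ℂ} (hd : DifferentiableOn ℂ φ (ball 0 1))
    (hm : MapsTo φ (ball 0 1) (ball 0 1)) {a z : ℂ} (ha : a ∈ ball (0 : ℂ) 1)
    (hz : z ∈ ball (0 : ℂ) 1) : ‖discMobius (φ a) (φ z)‖ ≤ ‖discMobius a z‖ := by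
  have ha' := mem_ball_zero_iff.1 ha
  have hφa := mem_ball_zero_iff.1 (hm ha)
  -- Schwarz's lemma for `discMobius (φ a) ∘ φ ∘ discMobius a`, which fixes `0`
  have key := Complex.norm_le_norm_of_mapsTo_ball
    (f := discMobius (φ a) ∘ φ ∘ discMobius a)
    ((differentiableOn_discMobius hφa).comp (hd.comp (differentiableOn_discMobius ha')
      (mapsTo_discMobius ha')) (hm.comp (mapsTo_discMobius ha')))
    ((mapsTo_discMobius hφa).comp (hm.comp (mapsTo_discMobius ha')) |>.mono_right
      ball_subset_closedBall)
    (by simp [discMobius]) (norm_discMobius_lt_one ha' (mem_ball_zero_iff.1 hz))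
  simpa [discMobius_discMobius ha' (mem_ball_zero_iff.1 hz)] using key

theorem normSq_one_sub_mul_sub_mul_normSq (r : ℝ) (s : ℂ) :
    normSq (1 - r * s) - r * normSq (1 - s) = (1 - r) * (1 - r * normSq s) := by
  simp only [normSq_apply, sub_re, sub_im, mul_re, mul_im, one_re, one_im, ofReal_re, ofReal_im]
  ring

theorem norm_discMobius_mul_lt {c a b : ℂ} (hc : ‖c‖ < 1) (ha : ‖a‖ < 1) (hb : ‖b‖ < 1)
    (hab : a ≠ b) : ‖discMobius (c * a) (c * b)‖ < ‖discMobius a b‖ := by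
  set r := normSq c
  set s := conj a * b
  have hr : r < 1 := normSq_lt_one_iff.2 hc
  have hs : r * normSq s < 1 := by
    rw [normSq_mul, normSq_conj]
    exact mul_lt_one_of_nonneg_of_lt_one_left (normSq_nonneg c) hr
      (mul_le_one₀ (normSq_lt_one_iff.2 ha).le (normSq_nonneg b) (normSq_lt_one_iff.2 hb).le)
  have hcs : conj (c * a) * (c * b) = r * s := by
    rw [map_mul, normSq_eq_conj_mul_self]; ring
  have key := normSq_one_sub_mul_sub_mul_normSq r s
  have hN : 0 < normSq (1 - s) := normSq_pos.2 (one_sub_conj_mul_ne_zero ha hb.le)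
  have hn : 0 < normSq (a - b) := normSq_pos.2 (sub_ne_zero.2 hab)
  have hNr : 0 < normSq (1 - r * s) := by
    nlinarith [mul_pos (sub_pos.2 hr) (sub_pos.2 hs), mul_nonneg (normSq_nonneg c) hN.le]
  rw [← sq_lt_sq₀ (norm_nonneg _) (norm_nonneg _), Complex.sq_norm, Complex.sq_norm, discMobius,
    discMobius, hcs, normSq_div, normSq_div, ← mul_sub, normSq_mul, div_lt_div_iff₀ hNr hN]
  nlinarith [mul_pos (sub_pos.2 hr) (sub_pos.2 hs)]

theorem norm_discMobius_const_mul_map_lt {φ : ℂ → ℂ} (hd : DifferentiableOn ℂ φ (ball 0 1))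
    (hm : MapsTo φ (ball 0 1) (ball 0 1)) {c a b : ℂ} (hc : ‖c‖ < 1) (ha : a ∈ ball (0 : ℂ) 1)
    (hb : b ∈ ball (0 : ℂ) 1) (hab : a ≠ b) :
    ‖discMobius (c * φ a) (c * φ b)‖ < ‖discMobius a b‖ := by
  rcases eq_or_ne (φ a) (φ b) with h | h
  · rw [h, discMobius_self, norm_zero, norm_pos_iff]
    exact (discMobius_eq_zero_iff (mem_ball_zero_iff.1 ha) (mem_ball_zero_iff.1 hb).le).not.2 hab
  · exact (norm_discMobius_mul_lt hc (mem_ball_zero_iff.1 (hm ha)) (mem_ball_zero_iff.1 (hm hb))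
      h).trans_le (norm_discMobius_map_le hd hm ha hb)

theorem exists_fixedPoint_const_mul {φ : ℂ → ℂ} (hd : DifferentiableOn ℂ φ (ball 0 1))
    (hm : MapsTo φ (ball 0 1) (ball 0 1)) {c : ℂ} (hc : ‖c‖ < 1) :
    ∃ z ∈ ball (0 : ℂ) 1, c * φ z = z := by
  set k : ℂ → ℂ := fun z => c * φ z
  have hK : closedBall (0 : ℂ) ‖c‖ ⊆ ball 0 1 := closedBall_subset_ball hc
  have hkK : MapsTo k (ball 0 1) (closedBall 0 ‖c‖) := fun z hz => by
    rw [mem_closedBall_zero_iff, norm_mul]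
    exact mul_le_of_le_one_right (norm_nonneg c) (mem_ball_zero_iff.1 (hm hz)).le
  have hk : ContinuousOn k (closedBall 0 ‖c‖) := (continuousOn_const.mul hd.continuousOn).mono hK
  have hcont : ContinuousOn (fun z => ‖discMobius z (k z)‖) (closedBall 0 ‖c‖) :=
    ((continuousOn_id.sub hk).div (continuousOn_const.sub (continuous_conj.continuousOn.mul hk))
      fun z hz => one_sub_conj_mul_ne_zero (mem_ball_zero_iff.1 (hK hz))
        (mem_ball_zero_iff.1 (hK (hkK (hK hz)))).le).norm
  -- a point minimizing the pseudo-hyperbolic displacement is fixed, since `k` strictly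
  -- decreases the displacement of any non-fixed point
  obtain ⟨z, hz, hmin⟩ := (isCompact_closedBall (0 : ℂ) ‖c‖).exists_isMinOn
    (nonempty_closedBall.2 (norm_nonneg c)) hcont
  refine ⟨z, hK hz, by_contra fun hne => ?_⟩
  exact absurd (isMinOn_iff.1 hmin _ (hkK (hK hz))) (not_le.2
    (norm_discMobius_const_mul_map_lt hd hm hc (hK hz) (hK (hkK (hK hz))) (Ne.symm hne)))

noncomputable def discHoro (p w : ℂ) : ℝ := normSq (p - w) / (1 - normSq w)

theorem normSq_one_sub_conj_mul_div (ha : ‖a‖ < 1) (hz : ‖z‖ < 1) :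
    normSq (1 - conj a * z) / (1 - normSq z) = (1 - normSq a) / (1 - normSq (discMobius a z)) := by
  have hN := normSq_pos.2 (one_sub_conj_mul_ne_zero ha hz.le)
  have hz' := sub_pos.2 (normSq_lt_one_iff.2 hz)
  have ha' := sub_pos.2 (normSq_lt_one_iff.2 ha)
  rw [one_sub_normSq_discMobius ha hz.le]
  field_simp

theorem normSq_one_sub_conj_mul_map_div_le {φ : ℂ → ℂ} (hd : DifferentiableOn ℂ φ (ball 0 1))
    (hm : MapsTo φ (ball 0 1) (ball 0 1)) {a z : ℂ} (ha : a ∈ ball (0 : ℂ) 1)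
    (hz : z ∈ ball (0 : ℂ) 1) (hle : ‖a‖ ≤ ‖φ a‖) :
    normSq (1 - conj (φ a) * φ z) / (1 - normSq (φ z)) ≤
      normSq (1 - conj a * z) / (1 - normSq z) := by
  rw [mem_ball_zero_iff] at ha hz
  have hφa := mem_ball_zero_iff.1 (hm (mem_ball_zero_iff.2 ha))
  have hφz := mem_ball_zero_iff.1 (hm (mem_ball_zero_iff.2 hz))
  rw [normSq_one_sub_conj_mul_div ha hz, normSq_one_sub_conj_mul_div hφa hφz]
  have hSP := norm_discMobius_map_le hd hm (mem_ball_zero_iff.2 ha) (mem_ball_zero_iff.2 hz)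
  simp only [← Complex.sq_norm]
  gcongr
  · exact sub_nonneg.2 (pow_le_one₀ (norm_nonneg a) ha.le)
  · exact sub_pos.2 (pow_lt_one₀ (norm_nonneg _) (norm_discMobius_lt_one ha hz) two_ne_zero)

theorem normSq_one_sub_conj_mul_of_norm_eq_one {p : ℂ} (hp : ‖p‖ = 1) (w : ℂ) :
    normSq (1 - conj p * w) = normSq (p - w) := by
  have hpp : conj p * p = 1 := by
    rw [← normSq_eq_conj_mul_self, ← Complex.sq_norm, hp]; norm_num
  rw [show 1 - conj p * w = conj p * (p - w) by rw [mul_sub, hpp], normSq_mul, normSq_conj,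
    ← Complex.sq_norm, hp, one_pow, one_mul]

theorem wolff_unitDisc {φ : ℂ → ℂ} (hd : DifferentiableOn ℂ φ (ball 0 1))
    (hm : MapsTo φ (ball 0 1) (ball 0 1)) (hfix : ∀ z ∈ ball (0 : ℂ) 1, φ z ≠ z) :
    ∃ p : ℂ, ‖p‖ = 1 ∧ ∀ z ∈ ball (0 : ℂ) 1, discHoro p (φ z) ≤ discHoro p z := by
  obtain ⟨ρ, -, hρ01, hρ⟩ := exists_seq_strictMono_tendsto' (zero_lt_one' ℝ)
  have hρc : ∀ n, ‖(ρ n : ℂ)‖ < 1 := fun n => by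
    rw [norm_real, Real.norm_of_nonneg (hρ01 n).1.le]; exact (hρ01 n).2
  choose z hz hzfix using fun n => exists_fixedPoint_const_mul hd hm (hρc n)
  have hφz : ∀ n, φ (z n) = z n / ρ n := fun n => by
    rw [eq_div_iff (ofReal_ne_zero.2 (hρ01 n).1.ne'), mul_comm, hzfix]
  obtain ⟨p, hp, σ, hσ, hzσ⟩ :=
    (isCompact_closedBall (0 : ℂ) 1).tendsto_subseq fun n => ball_subset_closedBall (hz n)
  have hφzσ : Tendsto (fun n => φ (z (σ n))) atTop (𝓝 p) := by
    have hρσ : Tendsto (fun n => (ρ (σ n) : ℂ)) atTop (𝓝 1) :=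
      (continuous_ofReal.tendsto 1).comp (hρ.comp hσ.tendsto_atTop)
    have := hzσ.div hρσ one_ne_zero
    rw [div_one] at this
    exact this.congr fun n => (hφz (σ n)).symm
  have hp1 : ‖p‖ = 1 := by
    refine (mem_closedBall_zero_iff.1 hp).antisymm (not_lt.1 fun hlt => ?_)
    have hpball := mem_ball_zero_iff.2 hlt
    refine hfix p hpball (tendsto_nhds_unique ?_ hφzσ)
    exact (hd.continuousOn.continuousAt (isOpen_ball.mem_nhds hpball)).tendsto.comp hzσ
  refine ⟨p, hp1, fun w hw => ?_⟩
  have hcont : ∀ v : ℂ, Continuous fun a : ℂ => normSq (1 - conj a * v) / (1 - normSq v) :=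
    fun v => by fun_prop
  have key : ∀ n, normSq (1 - conj (φ (z (σ n))) * φ w) / (1 - normSq (φ w)) ≤
      normSq (1 - conj (z (σ n)) * w) / (1 - normSq w) := fun n => by
    refine normSq_one_sub_conj_mul_map_div_le hd hm (hz (σ n)) hw ?_
    rw [hφz, norm_div, norm_real, Real.norm_of_nonneg (hρ01 (σ n)).1.le]
    exact le_div_self (norm_nonneg _) (hρ01 (σ n)).1 (hρ01 (σ n)).2.le
  have := le_of_tendsto_of_tendsto' ((hcont _).tendsto p |>.comp hφzσ)
    ((hcont _).tendsto p |>.comp hzσ) key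
  simpa only [discHoro, normSq_one_sub_conj_mul_of_norm_eq_one hp1] using this

end DiscMobius

noncomputable def cayley (z : ℂ) : ℂ := (z - I) / (z + I)

noncomputable def cayleyInv (w : ℂ) : ℂ := I * (1 + w) / (1 - w)

theorem add_I_ne_zero {z : ℂ} (hz : 0 ≤ z.im) : z + I ≠ 0 := fun h => by
  have := congrArg im h
  simp only [add_im, I_im, zero_im] at this
  linarith

theorem one_sub_normSq_cayley {z : ℂ} (hz : z + I ≠ 0) :
    1 - normSq (cayley z) = 4 * z.im / normSq (z + I) := by
  have hN : normSq (z + I) ≠ 0 := normSq_eq_zero.not.2 hz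
  rw [cayley, normSq_div, eq_div_iff hN, sub_mul, div_mul_cancel₀ _ hN]
  simp only [normSq_apply, add_re, add_im, sub_re, sub_im, I_re, I_im]
  ring

theorem norm_cayley_lt_one {z : ℂ} (hz : 0 < z.im) : ‖cayley z‖ < 1 := by
  have hI := add_I_ne_zero hz.le
  have : 0 < 1 - normSq (cayley z) := by
    rw [one_sub_normSq_cayley hI]; exact div_pos (by linarith) (normSq_pos.2 hI)
  exact normSq_lt_one_iff.1 (sub_pos.1 this)

theorem mapsTo_cayley : MapsTo cayley {z : ℂ | 0 < z.im} (ball 0 1) :=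
  fun _ hz => mem_ball_zero_iff.2 (norm_cayley_lt_one hz)

theorem cayleyInv_im (w : ℂ) : (cayleyInv w).im = (1 - normSq w) / normSq (1 - w) := by
  simp only [cayleyInv, div_im, mul_re, mul_im, I_re, I_im, add_re, add_im, sub_re, sub_im,
    one_re, one_im, normSq_apply]
  ring

theorem mapsTo_cayleyInv : MapsTo cayleyInv (ball 0 1) {z : ℂ | 0 < z.im} := fun w hw => by
  have hw1 := mem_ball_zero_iff.1 hw
  rw [mem_ofPred_eq, cayleyInv_im]
  refine div_pos (sub_pos.2 (normSq_lt_one_iff.2 hw1)) (normSq_pos.2 (sub_ne_zero.2 ?_))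
  rintro rfl
  simp at hw1

theorem cayley_cayleyInv {w : ℂ} (hw : w ≠ 1) : cayley (cayleyInv w) = w := by
  have hw' : 1 - w ≠ 0 := sub_ne_zero.2 hw.symm
  rw [cayley, cayleyInv]
  field_simp
  ring

theorem cayleyInv_cayley {z : ℂ} (hz : z + I ≠ 0) : cayleyInv (cayley z) = z := by
  rw [cayley, cayleyInv]
  field_simp
  ring

theorem exists_cayley_ofReal_eq {p : ℂ} (hp : ‖p‖ = 1) (hp1 : p ≠ 1) : ∃ x : ℝ, cayley x = p := by
  refine ⟨(cayleyInv p).re, ?_⟩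
  have hx : ((cayleyInv p).re : ℂ) = cayleyInv p := by
    refine Complex.ext (ofReal_re _) ?_
    rw [ofReal_im, cayleyInv_im, ← Complex.sq_norm, hp]
    simp
  rw [hx, cayley_cayleyInv hp1]

theorem differentiableOn_cayley : DifferentiableOn ℂ cayley {z : ℂ | 0 < z.im} := fun _ hz =>
  (differentiableAt_id.sub_const I |>.div (differentiableAt_id.add_const I)
    (add_I_ne_zero (le_of_lt hz))).differentiableWithinAt

theorem differentiableOn_cayleyInv : DifferentiableOn ℂ cayleyInv (ball 0 1) := fun w hw => by
  have hw1 : (1 : ℂ) - w ≠ 0 := sub_ne_zero.2 fun h => by simp [← h] at hw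
  exact ((differentiableAt_const I).mul ((differentiableAt_const 1).add differentiableAt_id) |>.div
    ((differentiableAt_const 1).sub differentiableAt_id) hw1).differentiableWithinAt

theorem discHoro_one_cayley {z : ℂ} (hz : 0 < z.im) : discHoro 1 (cayley z) = 1 / z.im := by
  have hI := add_I_ne_zero hz.le
  have hN := normSq_pos.2 hI
  rw [discHoro, one_sub_normSq_cayley hI, show 1 - cayley z = 2 * I / (z + I) by
    rw [cayley]; field_simp; ring, normSq_div]
  simp only [normSq_mul, normSq_I, normSq_ofNat]
  field_simp
  ring

theorem discHoro_cayley_cayley {a z : ℂ} (ha : a + I ≠ 0) (hz : 0 < z.im) :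
    discHoro (cayley a) (cayley z) = normSq (z - a) / (normSq (a + I) * z.im) := by
  have hI := add_I_ne_zero hz.le
  have hN := normSq_pos.2 hI
  have hNa := normSq_pos.2 ha
  rw [discHoro, one_sub_normSq_cayley hI,
    show cayley a - cayley z = 2 * I * (z - a) / -((a + I) * (z + I)) by
      rw [cayley, cayley]; field_simp; ring,
    normSq_div]
  simp only [normSq_mul, normSq_I, normSq_ofNat, normSq_neg]
  field_simp
  ring

theorem wolff_upperHalfPlane {h : ℂ → ℂ} (hd : DifferentiableOn ℂ h {z : ℂ | 0 < z.im})
    (hm : MapsTo h {z : ℂ | 0 < z.im} {z : ℂ | 0 < z.im})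
    (hfix : ∀ z ∈ {z : ℂ | 0 < z.im}, h z ≠ z) :
    (∀ z ∈ {z : ℂ | 0 < z.im}, z.im ≤ (h z).im) ∨
      ∃ x : ℝ, ∀ z ∈ {z : ℂ | 0 < z.im}, normSq (h z - x) / (h z).im ≤ normSq (z - x) / z.im := by
  have hφfix : ∀ w ∈ ball (0 : ℂ) 1, cayley (h (cayleyInv w)) ≠ w := fun w hw heq => by
    have hz := mapsTo_cayleyInv hw
    refine hfix _ hz ?_
    rw [← cayleyInv_cayley (add_I_ne_zero (hm hz).le), heq]
  obtain ⟨p, hp, hhoro⟩ := wolff_unitDisc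
    (differentiableOn_cayley.comp (hd.comp differentiableOn_cayleyInv mapsTo_cayleyInv)
      (hm.comp mapsTo_cayleyInv))
    (mapsTo_cayley.comp (hm.comp mapsTo_cayleyInv)) hφfix
  have horo : ∀ z ∈ {z : ℂ | 0 < z.im}, discHoro p (cayley (h z)) ≤ discHoro p (cayley z) :=
    fun z hz => by
      simpa [cayleyInv_cayley (add_I_ne_zero (le_of_lt hz))] using hhoro _ (mapsTo_cayley hz)
  rcases eq_or_ne p 1 with rfl | hp1
  · refine Or.inl fun z hz => ?_
    have := horo z hz
    rwa [discHoro_one_cayley hz, discHoro_one_cayley (hm hz), one_div_le_one_div (hm hz) hz] at this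
  · obtain ⟨x, rfl⟩ := exists_cayley_ofReal_eq hp hp1
    have hxI : (x : ℂ) + I ≠ 0 := add_I_ne_zero (by simp)
    refine Or.inr ⟨x, fun z hz => ?_⟩
    have := horo z hz
    rwa [discHoro_cayley_cayley hxI hz,
      discHoro_cayley_cayley hxI (hm hz), mul_comm, ← div_div, mul_comm, ← div_div,
      div_le_div_iff_of_pos_right (normSq_pos.2 hxI)] at this

theorem not_forall_normSq_sub_div_im_le_of_tendsto {h : ℂ → ℂ} {x : ℝ} {ζ : ℂ} (hζ : 0 < ζ.im)
    (hlim : Tendsto h (𝓝[{z : ℂ | 0 < z.im}] x) (𝓝 ζ)) :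
    ¬ ∀ z ∈ {z : ℂ | 0 < z.im}, normSq (h z - x) / (h z).im ≤ normSq (z - x) / z.im := by
  intro hle
  have hvert : Tendsto (fun ε : ℝ => (x : ℂ) + ε * I) (𝓝[>] 0) (𝓝[{z : ℂ | 0 < z.im}] x) := by
    refine tendsto_nhdsWithin_iff.2 ⟨?_, eventually_nhdsWithin_of_forall fun ε hε => by simpa⟩
    exact ((Continuous.tendsto (by fun_prop) 0).mono_left nhdsWithin_le_nhds).trans (by simp)
  have hlhs : Tendsto (fun ε : ℝ => normSq (h (x + ε * I) - x) / (h (x + ε * I)).im) (𝓝[>] 0)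
      (𝓝 (normSq (ζ - x) / ζ.im)) :=
    ((continuous_normSq.tendsto _).comp ((hlim.comp hvert).sub_const _)).div
      ((continuous_im.tendsto _).comp (hlim.comp hvert)) hζ.ne'
  have hrhs : Tendsto (fun ε : ℝ => normSq ((x : ℂ) + ε * I - x) / ((x : ℂ) + ε * I).im)
      (𝓝[>] 0) (𝓝 0) := by
    refine (tendsto_id.mono_left nhdsWithin_le_nhds).congr' ?_
    filter_upwards [self_mem_nhdsWithin] with ε hε
    simp [normSq_apply]
  have hpos : 0 < normSq (ζ - x) / ζ.im :=
    div_pos (normSq_pos.2 fun h0 => by simp [sub_eq_zero.1 h0] at hζ) hζ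
  refine hpos.not_ge (le_of_tendsto_of_tendsto hlhs hrhs ?_)
  filter_upwards [self_mem_nhdsWithin] with ε hε using hle _ (by simpa using hε)

theorem eventually_eq_of_eventually_deriv_eq_zero {𝕜 E : Type*} [RCLike 𝕜]
    [NormedAddCommGroup E] [NormedSpace 𝕜 E] {f : 𝕜 → E} {z₀ : 𝕜}
    (hf : ∀ᶠ z in 𝓝 z₀, DifferentiableAt 𝕜 f z) (h : ∀ᶠ z in 𝓝 z₀, deriv f z = 0) :
    ∀ᶠ z in 𝓝 z₀, f z = f z₀ := by
  obtain ⟨r, hr, hball⟩ := Metric.eventually_nhds_iff_ball.1 (hf.and h)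
  filter_upwards [isOpen_ball.mem_nhds (mem_ball_self hr)] with z hz
  exact isOpen_ball.is_const_of_deriv_eq_zero (convex_ball _ _).isPreconnected
    (fun y hy => (hball y hy).1.differentiableWithinAt) (fun y hy => (hball y hy).2) hz
    (mem_ball_self hr)

theorem differentiableOn_of_leftInvOn {f g : ℂ → ℂ} {U V : Set ℂ} (hU : IsOpen U) (hV : IsOpen V)
    (hf : DifferentiableOn ℂ f U) (hg : ContinuousOn g V) (hgUV : MapsTo g V U)
    (hfg : LeftInvOn f g V) : DifferentiableOn ℂ g V := by
  have hdiff : ∀ w ∈ V, deriv f (g w) ≠ 0 → DifferentiableAt ℂ g w := fun w hw hne =>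
    ((hf.differentiableAt (hU.mem_nhds (hgUV hw))).hasDerivAt.of_local_left_inverse
      (hg.continuousAt (hV.mem_nhds hw)) hne
      (eventually_of_mem (hV.mem_nhds hw) hfg)).differentiableAt
  intro w hw
  have hgw : ContinuousAt g w := hg.continuousAt (hV.mem_nhds hw)
  refine DifferentiableAt.differentiableWithinAt ?_
  by_cases hne : deriv f (g w) ≠ 0
  · exact hdiff w hw hne
  rcases ((hf.analyticOnNhd hU).deriv (g w) (hgUV hw)).eventually_eq_zero_or_eventually_ne_zero
    with hzero | hnz
  · -- `f` would be constant near `g w`, so `f ∘ g = id` would be constant near `w`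
    exfalso
    have hfconst := eventually_eq_of_eventually_deriv_eq_zero
      ((hU.eventually_mem (hgUV hw)).mono fun z hz => hf.differentiableAt (hU.mem_nhds hz)) hzero
    have hconst : ∀ᶠ v in 𝓝 w, v = w := by
      filter_upwards [hgw.eventually hfconst, hV.mem_nhds hw] with v hv hvV
      rw [← hfg hvV, ← hfg hw, hv]
    obtain ⟨v, hv, hvw⟩ := ((hconst.filter_mono nhdsWithin_le_nhds).and
      (self_mem_nhdsWithin (s := {w}ᶜ))).exists
    exact hvw hv
  · refine (analyticAt_of_differentiable_on_punctured_nhds_of_continuousAt ?_ hgw).differentiableAt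
    have hg' : Tendsto g (𝓝[≠] w) (𝓝[≠] (g w)) := by
      refine tendsto_nhdsWithin_iff.2 ⟨hgw.tendsto.mono_left nhdsWithin_le_nhds, ?_⟩
      filter_upwards [self_mem_nhdsWithin, eventually_nhdsWithin_of_eventually_nhds
        (hV.mem_nhds hw)] with v hvw hvV hgv
      exact hvw (mem_singleton_iff.2 (by rw [← hfg hvV, ← hfg hw, mem_singleton_iff.1 hgv]))
    filter_upwards [hg'.eventually hnz, eventually_nhdsWithin_of_eventually_nhds
      (hV.eventually_mem hw)] with v hv hvV using hdiff v hvV hv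

theorem add_ofReal_mul_I_ne_self (w : ℂ) {t : ℝ} (ht : t ≠ 0) : w + t * I ≠ w := by
  simpa [I_ne_zero] using ht

theorem HasDerivAt.re_nonneg_of_im_le {f : ℂ → ℂ} {f' z : ℂ} {w : ℝ → ℂ} (hf : HasDerivAt f f' z)
    (hw : Tendsto w (𝓝[>] 0) (𝓝 z)) (hfw : ∀ t : ℝ, 0 < t → f (w t) = f z + t * I)
    (him : ∀ t : ℝ, 0 < t → z.im ≤ (w t).im) : 0 ≤ f'.re := by
  have hw' : Tendsto w (𝓝[>] 0) (𝓝[≠] z) := by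
    refine tendsto_nhdsWithin_iff.2 ⟨hw, eventually_nhdsWithin_of_forall fun t ht hwt => ?_⟩
    have := hfw t ht
    rw [hwt] at this
    exact add_ofReal_mul_I_ne_self _ (ne_of_gt ht) this.symm
  refine ge_of_tendsto ((continuous_re.tendsto _).comp
    ((hasDerivAt_iff_tendsto_slope.1 hf).comp hw')) ?_
  filter_upwards [self_mem_nhdsWithin] with t ht
  simp only [Function.comp, slope_def_field, hfw t ht, add_sub_cancel_left, div_re, mul_re, mul_im,
    ofReal_re, ofReal_im, I_re, I_im, sub_im, mul_zero, zero_mul, sub_zero, mul_one, add_zero,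
    zero_div, zero_add]
  exact div_nonneg (mul_nonneg (le_of_lt ht) (sub_nonneg.2 (him t ht))) (normSq_nonneg _)

theorem tendsto_nhdsWithin_of_continuous_closure {X Y : Type*} [TopologicalSpace X]
    [TopologicalSpace Y] {s : Set X} {F : closure s → Y} (hF : Continuous F) {f : X → Y}
    (hFf : ∀ z (hz : z ∈ s), F ⟨z, subset_closure hz⟩ = f z) {x : X} (hx : x ∈ closure s) :
    Tendsto f (𝓝[s] x) (𝓝 (F ⟨x, hx⟩)) := by
  have hcomap : comap ((↑) : s → X) (𝓝 x) = comap (inclusion subset_closure) (𝓝 ⟨x, hx⟩) := by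
    rw [nhds_subtype, comap_comap]; rfl
  rw [nhdsWithin, ← subtype_coe_map_comap, tendsto_map'_iff, hcomap]
  exact ((hF.tendsto _).comp tendsto_comap).congr fun z => hFf z z.2

theorem continuousOn_invFunOn_of_homeomorph_closure {X Y : Type*} [TopologicalSpace X]
    [TopologicalSpace Y] [Nonempty X] {U : Set X} {V : Set Y} {f : X → Y} (hbij : BijOn f U V)
    (F : closure U ≃ₜ closure V) (hFf : ∀ z (hz : z ∈ U), (F ⟨z, subset_closure hz⟩ : Y) = f z) :
    ContinuousOn (Function.invFunOn f U) V := by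
  have hFsymm : ∀ w (hw : w ∈ V), (F.symm ⟨w, subset_closure hw⟩ : X) = Function.invFunOn f U w :=
    fun w hw => by
      have hz := hbij.surjOn.mapsTo_invFunOn hw
      refine congrArg Subtype.val
        ((F.symm_apply_eq (x := ⟨_, subset_closure hz⟩)).2 (Subtype.ext ?_))
      rw [hFf _ hz, hbij.invOn_invFunOn.2 hw]
  intro w hw
  have := tendsto_nhdsWithin_of_continuous_closure (continuous_subtype_val.comp F.symm.continuous)
    hFsymm (subset_closure hw)
  rwa [Function.comp_apply, hFsymm w hw] at this

theorem AnalyticOnNhd.eqOn_of_isMinOn_re {u : ℂ → ℂ} {U : Set ℂ} {z₀ : ℂ}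
    (hu : AnalyticOnNhd ℂ u U) (hU : IsPreconnected U) (hUo : IsOpen U) (hz₀ : z₀ ∈ U)
    (hmin : IsMinOn (fun z => (u z).re) U z₀) : EqOn u (fun _ => u z₀) U := by
  rcases hu.is_constant_or_isOpen hU with ⟨c, hc⟩ | hopen
  · exact fun z hz => (hc z hz).trans (hc z₀ hz₀).symm
  exfalso
  obtain ⟨ε, hε, hball⟩ := Metric.isOpen_iff.1 (hopen U subset_rfl hUo) _ (mem_image_of_mem u hz₀)
  have hmem : u z₀ - (ε / 2 : ℝ) ∈ ball (u z₀) ε := by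
    rw [mem_ball, dist_eq_norm, sub_sub_cancel_left, norm_neg, norm_real,
      Real.norm_of_nonneg (by positivity)]
    linarith
  obtain ⟨z, hz, hzu⟩ := hball hmem
  have := isMinOn_iff.1 hmin z hz
  rw [hzu, sub_re, ofReal_re] at this
  linarith

theorem not_mapsTo_mul_add_graph {c : ℂ} (hc : c.re = 0) (hc0 : c ≠ 0) (d : ℂ) (g : ℝ → ℝ) :
    ¬ MapsTo (fun z => c * z + d) {z : ℂ | 0 < z.im} {z : ℂ | g z.re < z.im} := by
  have hk : c.im ≠ 0 := fun h => hc0 (Complex.ext hc h)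
  intro hmaps
  set x : ℝ := (g (d.re - c.im) - 1 - d.im) / c.im
  have := hmaps (show (x + I : ℂ) ∈ {z : ℂ | 0 < z.im} by simp)
  simp only [mem_ofPred_eq, add_re, add_im, mul_re, mul_im, ofReal_re, ofReal_im, I_re, I_im, hc,
    zero_mul, mul_one, add_zero, zero_add, zero_sub, neg_add_eq_sub] at this
  rw [mul_div_cancel₀ _ hk] at this
  linarith

theorem add_ofReal_mul_I_mem_of_mem_closure {g : ℝ → ℝ} (hg : Continuous g) {w : ℂ}
    (hw : w ∈ closure {z : ℂ | g z.re < z.im}) {t : ℝ} (ht : 0 < t) :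
    w + t * I ∈ {z : ℂ | g z.re < z.im} := by
  have : g w.re ≤ w.im := closure_minimal (fun (z : ℂ) (hz : g z.re < z.im) => hz.le)
    (isClosed_le (hg.comp continuous_re) continuous_im) hw
  simp only [mem_ofPred_eq, add_re, add_im, mul_re, mul_im, ofReal_re, ofReal_im, I_re, I_im,
    mul_zero, mul_one, sub_zero, add_zero]
  linarith

theorem im_le_im_of_forall_tendsto {h : ℂ → ℂ} (hd : DifferentiableOn ℂ h {z : ℂ | 0 < z.im})
    (hm : MapsTo h {z : ℂ | 0 < z.im} {z : ℂ | 0 < z.im})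
    (hfix : ∀ z ∈ {z : ℂ | 0 < z.im}, h z ≠ z)
    (hbd : ∀ x : ℝ, ∃ ζ ∈ {z : ℂ | 0 < z.im}, Tendsto h (𝓝[{z : ℂ | 0 < z.im}] x) (𝓝 ζ)) :
    ∀ z ∈ {z : ℂ | 0 < z.im}, z.im ≤ (h z).im :=
  (wolff_upperHalfPlane hd hm hfix).resolve_right fun ⟨x, hx⟩ => by
    obtain ⟨ζ, hζ, hlim⟩ := hbd x
    exact not_forall_normSq_sub_div_im_le_of_tendsto hζ hlim hx

theorem re_deriv_nonneg_of_homeomorph_closure {g : ℝ → ℝ} (hg : Continuous g) {f : ℂ → ℂ}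
    (hf : DifferentiableOn ℂ f {z : ℂ | 0 < z.im})
    (hbij : BijOn f {z : ℂ | 0 < z.im} {z : ℂ | g z.re < z.im})
    (F : (closure {z : ℂ | 0 < z.im} : Set ℂ) ≃ₜ (closure {z : ℂ | g z.re < z.im} : Set ℂ))
    (hFf : ∀ z (hz : z ∈ {z : ℂ | 0 < z.im}), (F ⟨z, subset_closure hz⟩ : ℂ) = f z) :
    ∀ z ∈ {z : ℂ | 0 < z.im}, 0 ≤ (deriv f z).re := by
  have hU : IsOpen {z : ℂ | 0 < z.im} := isOpen_lt continuous_const continuous_im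
  have hV : IsOpen {z : ℂ | g z.re < z.im} := isOpen_lt (hg.comp continuous_re) continuous_im
  set finv := Function.invFunOn f {z : ℂ | 0 < z.im}
  have hinv := hbij.invOn_invFunOn
  have hfinvV := hbij.surjOn.mapsTo_invFunOn
  have hfinvc := continuousOn_invFunOn_of_homeomorph_closure hbij F hFf
  have hfinvd := differentiableOn_of_leftInvOn hU hV hf hfinvc hfinvV hinv.2
  have hshift : ∀ t : ℝ, 0 < t →
      MapsTo (fun z => f z + t * I) {z : ℂ | 0 < z.im} {z : ℂ | g z.re < z.im} :=
    fun t ht z hz => add_ofReal_mul_I_mem_of_mem_closure hg (subset_closure (hbij.mapsTo hz)) ht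
  have hup : ∀ t : ℝ, 0 < t → ∀ z ∈ {z : ℂ | 0 < z.im}, z.im ≤ (finv (f z + t * I)).im := by
    intro t ht
    refine im_le_im_of_forall_tendsto (hfinvd.comp (hf.add_const _) (hshift t ht))
      (hfinvV.comp (hshift t ht)) (fun z hz hfix => ?_) (fun x => ?_)
    · have : f (finv (f z + t * I)) = f z + t * I := hinv.2 (hshift t ht hz)
      rw [hfix] at this
      exact add_ofReal_mul_I_ne_self (f z) ht.ne' this.symm
    · have hx : (x : ℂ) ∈ closure {z : ℂ | 0 < z.im} := by simp
      have hb := add_ofReal_mul_I_mem_of_mem_closure hg (F ⟨x, hx⟩).2 ht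
      exact ⟨_, hfinvV hb, (hfinvc.continuousAt (hV.mem_nhds hb)).tendsto.comp
        ((tendsto_nhdsWithin_of_continuous_closure (continuous_subtype_val.comp F.continuous)
          hFf hx).add_const _)⟩
  intro z hz
  refine (hf.differentiableAt (hU.mem_nhds hz)).hasDerivAt.re_nonneg_of_im_le ?_
    (fun t ht => hinv.2 (hshift t ht hz)) (fun t ht => hup t ht z hz)
  have hcurve : Tendsto (fun t : ℝ => f z + t * I) (𝓝[>] 0) (𝓝 (f z)) :=
    (Continuous.tendsto' (by fun_prop) 0 _ (by simp)).mono_left nhdsWithin_le_nhds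
  have := (hfinvc.continuousAt (hV.mem_nhds (hbij.mapsTo hz))).tendsto.comp hcurve
  rwa [hinv.1 hz] at this

theorem re_deriv_pos_of_re_deriv_nonneg {g : ℝ → ℝ} {f : ℂ → ℂ}
    (hf : DifferentiableOn ℂ f {z : ℂ | 0 < z.im}) (hinj : InjOn f {z : ℂ | 0 < z.im})
    (hmaps : MapsTo f {z : ℂ | 0 < z.im} {z : ℂ | g z.re < z.im})
    (hre : ∀ z ∈ {z : ℂ | 0 < z.im}, 0 ≤ (deriv f z).re) :
    ∀ z ∈ {z : ℂ | 0 < z.im}, 0 < (deriv f z).re := by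
  intro z₀ hz₀
  refine (hre z₀ hz₀).lt_of_ne fun h0 => ?_
  have hU : IsOpen {z : ℂ | 0 < z.im} := isOpen_lt continuous_const continuous_im
  have hUc : IsPreconnected {z : ℂ | 0 < z.im} := (convex_halfSpace_im_gt 0).isPreconnected
  set c := deriv f z₀
  have hconst : EqOn (deriv f) (fun _ => c) {z : ℂ | 0 < z.im} :=
    (hf.analyticOnNhd hU).deriv.eqOn_of_isMinOn_re hUc hU hz₀
      (isMinOn_iff.2 fun z hz => h0 ▸ hre z hz)
  obtain ⟨d, hd⟩ := hU.exists_eq_add_of_deriv_eq hUc hf (differentiableOn_id.const_mul c)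
    fun z hz => by simp [hconst hz]
  have hI : I ∈ {z : ℂ | 0 < z.im} := by simp
  have h2I : 2 * I ∈ {z : ℂ | 0 < z.im} := by simp
  have hc0 : c ≠ 0 := fun hc => by
    have := hinj hI h2I (by rw [hd hI, hd h2I, hc]; simp)
    simpa using congrArg im this
  exact not_mapsTo_mul_add_graph h0.symm hc0 d g (hmaps.congr hd)

/-- Let `Ω` be the domain above the graph of a continuous function `g : ℝ → ℝ` and let
`f` be a conformal map of the upper half-plane `ℍ` onto `Ω` extending to a homeomorphism
of the closures. Then `Re f' > 0` on `ℍ`. -/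
theorem re_deriv_pos_of_conformal_onto_graph_domain
    (g : ℝ → ℝ) (hg : Continuous g) (f : ℂ → ℂ)
    (hf : DifferentiableOn ℂ f {z : ℂ | 0 < z.im})
    (hbij : Set.BijOn f {z : ℂ | 0 < z.im} {z : ℂ | g z.re < z.im})
    (F : (closure {z : ℂ | 0 < z.im} : Set ℂ) ≃ₜ (closure {z : ℂ | g z.re < z.im} : Set ℂ))
    (hFf : ∀ z (hz : z ∈ {z : ℂ | 0 < z.im}), (F ⟨z, subset_closure hz⟩ : ℂ) = f z) :
    ∀ z ∈ {z : ℂ | 0 < z.im}, 0 < (deriv f z).re :=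
  re_deriv_pos_of_re_deriv_nonneg hf hbij.injOn hbij.mapsTo
    (re_deriv_nonneg_of_homeomorph_closure hg hf hbij F hFf)
end

section
/- Let g : [a,b] → ℝ, p > 0 and C > 0 be such that for every N ≥ 1 and every partition a = x_0 < x_1 < … < x_N = b one has Σ_{j=1}^N |g(x_j) − g(x_{j−1})| ≤ C (log(N+1))^p. Then for every q > p, g has finite Φ_q-variation on [a,b]. -/
/-!
Write `a_j = |g(x_{j+1}) - g(x_j)|` for the increments along a partition. Merging all intervals
outside a set `T` of indices leaves a partition with at most `2 #T + 1` intervals, so the `n`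
largest increments sum to at most `C log(2n + 2)^p`. For the decreasing rearrangement `c` of the
increments this gives `c_k ≤ C log(2k + 4)^p / (k + 1) ≤ (k + 1)^(-1/2)` for large `k`, uniformly
in the partition, hence `Φ(c_k) ≤ c_k (log(k + 1) / 2)^(-q)`. On the block
`2^(2^m) ≤ k < 2^(2^(m+1))` this weight is at most `(2^(m-1) log 2)^(-q)` while the `c_k` sum to
at most `C (2^(m+2) log 2)^p`, so the block contributes `O(2^(m(p-q)))`: a convergent geometric
series because `q > p`.
-/

open Set

/-- `Φ` is a gauge of the form `Φ_q`: a convex increasing function `[0,∞) → [0,∞)` with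
`Φ(t) = t/(log(1/t))^q` for all sufficiently small `t > 0`. -/
def IsVarGauge (q : ℝ) (Φ : ℝ → ℝ) : Prop :=
  ConvexOn ℝ (Ici 0) Φ ∧ MonotoneOn Φ (Ici 0) ∧ (∀ t : ℝ, 0 ≤ t → 0 ≤ Φ t) ∧
    ∃ t₀ > 0, ∀ t : ℝ, 0 < t → t ≤ t₀ → Φ t = t / Real.log (1 / t) ^ q

/-- `g` has finite `Φ`-variation on `[a, b]`: the sums `Σ Φ(|g(x_j) − g(x_{j−1})|)` over all
partitions `a = x₀ < x₁ < … < x_N = b` are uniformly bounded. -/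
def HasFinitePhiVariationOn (Φ : ℝ → ℝ) (g : ℝ → ℝ) (a b : ℝ) : Prop :=
  ∃ B : ℝ, ∀ (N : ℕ) (x : ℕ → ℝ), 1 ≤ N → x 0 = a → x N = b →
    (∀ j < N, x j < x (j + 1)) →
    ∑ j ∈ Finset.range N, Φ (|g (x (j + 1)) - g (x j)|) ≤ B

open Real Finset Filter

namespace IsVarGauge

variable {q : ℝ} {Φ : ℝ → ℝ}

theorem map_zero (hΦ : IsVarGauge q Φ) (hq : 0 ≤ q) : Φ 0 = 0 := by
  obtain ⟨-, hmono, hnonneg, t₀, ht₀, hform⟩ := hΦ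
  refine le_antisymm (le_of_forall_pos_le_add fun ε hε => ?_) (hnonneg 0 le_rfl)
  set t := min (min t₀ ε) (exp (-1))
  have ht : 0 < t := by positivity
  have hlog : 1 ≤ log (1 / t) := by
    rw [one_div, log_inv, le_neg, log_le_iff_le_exp ht]
    exact min_le_right _ _
  calc Φ 0 ≤ Φ t := hmono (mem_Ici.2 le_rfl) ht.le ht.le
    _ = t / log (1 / t) ^ q := hform t ht (min_le_left _ _ |>.trans (min_le_left _ _))
    _ ≤ t := div_le_self ht.le (one_le_rpow hlog hq)
    _ ≤ 0 + ε := by rw [zero_add]; exact min_le_left _ _ |>.trans (min_le_right _ _)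

theorem exists_le_div_log_rpow (hΦ : IsVarGauge q Φ) (hq : 0 ≤ q) :
    ∃ t₀ > 0, ∀ t u : ℝ, 0 ≤ t → t ≤ t₀ → 1 < u → t * u ≤ 1 → Φ t ≤ t / log u ^ q := by
  have h0 := hΦ.map_zero hq
  obtain ⟨-, -, -, t₀, ht₀, hform⟩ := hΦ
  refine ⟨t₀, ht₀, fun t u ht htt₀ hu htu => ?_⟩
  rcases ht.eq_or_lt with rfl | ht
  · simp [h0]
  have hlog : log u ≤ log (1 / t) :=
    log_le_log (by linarith) (by rw [le_div_iff₀ ht]; linarith)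
  rw [hform t ht htt₀]
  exact div_le_div_of_nonneg_left ht.le (rpow_pos_of_pos (log_pos hu) q)
    (rpow_le_rpow (log_nonneg hu.le) hlog hq)

end IsVarGauge

theorem exists_mem_Ico_notMem_union_image_succ {T : Finset ℕ} {N : ℕ} (h : 2 * #T + 1 < N) :
    ∃ j ∈ Finset.Ico 1 N, j ∉ T ∪ T.image (· + 1) :=
  exists_mem_notMem_of_card_lt_card <|
    calc #(T ∪ T.image (· + 1)) ≤ #T + #T :=
          (Finset.card_union_le _ _).trans (Nat.add_le_add_left card_image_le _)
      _ < #(Finset.Ico 1 N) := by rw [Nat.card_Ico]; omega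

theorem exists_partition_erase {x : ℕ → ℝ} {N j₀ : ℕ} (hx : ∀ j < N, x j < x (j + 1))
    {T : Finset ℕ} (hT : T ⊆ range N) (hj₀ : j₀ ∈ Finset.Ico 1 N)
    (hj₀T : j₀ ∉ T ∪ T.image (· + 1)) (F : ℝ → ℝ → ℝ) :
    ∃ (x' : ℕ → ℝ) (T' : Finset ℕ), x' 0 = x 0 ∧ x' (N - 1) = x N ∧
      (∀ i < N - 1, x' i < x' (i + 1)) ∧ T' ⊆ range (N - 1) ∧ #T' = #T ∧
      ∑ i ∈ T', F (x' (i + 1)) (x' i) = ∑ j ∈ T, F (x (j + 1)) (x j) := by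
  obtain ⟨hj₀1, hj₀N⟩ := Finset.mem_Ico.1 hj₀
  have hTj : ∀ j ∈ T, j ≠ j₀ ∧ j + 1 ≠ j₀ ∧ j < N := fun j hj =>
    ⟨by rintro rfl; exact hj₀T (mem_union_left _ hj),
      by rintro rfl; exact hj₀T (mem_union_right _ (mem_image_of_mem _ hj)), mem_range.1 (hT hj)⟩
  set e : ℕ → ℕ := fun j => if j < j₀ then j else j - 1
  have he : Set.InjOn e T := by
    intro j₁ h₁ j₂ h₂ h
    have := hTj j₁ h₁
    have := hTj j₂ h₂
    simp only [e] at h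
    split_ifs at h <;> omega
  refine ⟨fun i => x (if i < j₀ then i else i + 1), T.image e, by simp [show 0 < j₀ by omega],
    ?_, ?_, ?_, card_image_of_injOn he, ?_⟩
  · simp only
    rw [if_neg (by omega), Nat.sub_add_cancel (by omega)]
  · intro i hi
    simp only
    split_ifs with h₁ h₂ h₂
    · exact hx i (by omega)
    · exact (hx i (by omega)).trans (hx (i + 1) (by omega))
    · omega
    · exact hx (i + 1) (by omega)
  · intro i hi
    obtain ⟨j, hj, rfl⟩ := mem_image.1 hi
    have := hTj j hj
    simp only [Finset.mem_range, e]
    split_ifs <;> omega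
  · rw [sum_image he]
    refine sum_congr rfl fun j hj => ?_
    have := hTj j hj
    simp only [e]
    split_ifs <;> first | rfl | omega | rw [Nat.sub_add_cancel (by omega)]

theorem sum_abs_sub_le_of_subset {g : ℝ → ℝ} {a b C p : ℝ} (hC : 0 ≤ C) (hp : 0 ≤ p)
    (h : ∀ (N : ℕ) (x : ℕ → ℝ), 1 ≤ N → x 0 = a → x N = b → (∀ j < N, x j < x (j + 1)) →
      ∑ j ∈ range N, |g (x (j + 1)) - g (x j)| ≤ C * log (N + 1) ^ p)
    (N : ℕ) (x : ℕ → ℝ) (hx0 : x 0 = a) (hxN : x N = b) (hx : ∀ j < N, x j < x (j + 1))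
    (T : Finset ℕ) (hT : T ⊆ range N) :
    ∑ j ∈ T, |g (x (j + 1)) - g (x j)| ≤ C * log (2 * #T + 2) ^ p := by
  induction N using Nat.strong_induction_on generalizing x T with
  | _ N ih =>
  by_cases hN : N ≤ 2 * #T + 1
  · rcases Nat.eq_zero_or_pos N with rfl | hN0
    · rw [range_zero, subset_empty] at hT
      subst hT
      simpa using mul_nonneg hC (rpow_nonneg (log_nonneg one_le_two) p)
    calc ∑ j ∈ T, |g (x (j + 1)) - g (x j)| ≤ ∑ j ∈ range N, |g (x (j + 1)) - g (x j)| :=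
          sum_le_sum_of_subset_of_nonneg hT fun _ _ _ => abs_nonneg _
      _ ≤ C * log (N + 1) ^ p := h N x hN0 hx0 hxN hx
      _ ≤ C * log (2 * #T + 2) ^ p := by
          have : (N : ℝ) ≤ 2 * #T + 1 := by exact_mod_cast hN
          gcongr C * log ?_ ^ p
          · exact log_nonneg (by linarith [N.cast_nonneg (α := ℝ)])
          · linarith
  · obtain ⟨j₀, hj₀, hj₀T⟩ := exists_mem_Ico_notMem_union_image_succ (not_le.1 hN)
    obtain ⟨x', T', hx'0, hx'N, hx', hT', hcard, hsum⟩ :=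
      exists_partition_erase hx hT hj₀ hj₀T fun u v => |g u - g v|
    rw [← hsum, ← hcard]
    exact ih (N - 1) (by omega) x' (hx'0.trans hx0) (hx'N.trans hxN) hx' T' hT'

theorem exists_antitone_rearrangement (a : ℕ → ℝ) (ha : ∀ j, 0 ≤ a j) (N : ℕ) :
    ∃ c : ℕ → ℝ, Antitone c ∧ (∀ k, 0 ≤ c k) ∧
      (∀ f : ℝ → ℝ, ∑ k ∈ range N, f (c k) = ∑ j ∈ range N, f (a j)) ∧
      ∀ n, ∃ T ⊆ range N, #T ≤ n ∧ ∑ k ∈ range n, c k = ∑ j ∈ T, a j := by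
  set σ := Tuple.sort fun i : Fin N => OrderDual.toDual (a i)
  have hσ : Antitone fun i => a (σ i) := fun _ _ hij =>
    Tuple.monotone_sort (fun i : Fin N => OrderDual.toDual (a i)) hij
  set τ : ℕ → ℕ := fun k => if h : k < N then σ ⟨k, h⟩ else k
  have hτN : ∀ k < N, τ k < N := fun k hk => by simp [τ, hk]
  have hτ : ∀ i < N, ∀ j < N, τ i = τ j → i = j := by
    intro i hi j hj h
    simp only [τ, dif_pos hi, dif_pos hj] at h
    simpa using σ.injective (Fin.ext h)
  set c : ℕ → ℝ := fun k => if k < N then a (τ k) else 0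
  have hc0 : ∀ k, 0 ≤ c k := fun k => by simp only [c]; split_ifs <;> simp [ha]
  refine ⟨c, fun i j hij => ?_, hc0, fun f => ?_, fun n => ?_⟩
  · by_cases hj : j < N
    · simpa [c, τ, hj, hij.trans_lt hj] using hσ (Fin.mk_le_mk.2 hij)
    · simpa [c, hj] using hc0 i
  · rw [← Fin.sum_univ_eq_sum_range, ← Fin.sum_univ_eq_sum_range]
    refine Eq.trans ?_ (Equiv.sum_comp σ fun i => f (a i))
    simp [c, τ]
  · refine ⟨((range n).filter (· < N)).image τ, fun j hj => ?_, card_image_le.trans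
      ((card_filter_le _ _).trans (card_range n).le), ?_⟩
    · obtain ⟨k, hk, rfl⟩ := mem_image.1 hj
      exact Finset.mem_range.2 (hτN k (mem_filter.1 hk).2)
    · rw [sum_image fun i hi j hj => hτ i (mem_filter.1 hi).2 j (mem_filter.1 hj).2, sum_filter]

theorem eventually_mul_log_rpow_le_sqrt (C p : ℝ) : ∀ᶠ y in atTop, C * log y ^ p ≤ √y / 2 := by
  have hpos : 0 < 1 / (2 * (|C| + 1)) := by positivity
  filter_upwards [(isLittleO_log_rpow_rpow_atTop p one_half_pos).bound hpos,
    eventually_ge_atTop 1] with y hy hy1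
  have hlog : 0 ≤ log y ^ p := rpow_nonneg (log_nonneg hy1) p
  rw [norm_of_nonneg hlog, norm_of_nonneg (by positivity), ← sqrt_eq_rpow] at hy
  calc C * log y ^ p ≤ (|C| + 1) * log y ^ p := by
        gcongr; linarith [le_abs_self C]
    _ ≤ (|C| + 1) * (1 / (2 * (|C| + 1)) * √y) := by gcongr
    _ = √y / 2 := by field_simp

theorem Antitone.succ_mul_le_sum_range {c : ℕ → ℝ} (hc : Antitone c) (k : ℕ) :
    (k + 1) * c k ≤ ∑ i ∈ range (k + 1), c i := by
  simpa using card_nsmul_le_sum (range (k + 1)) c (c k)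
    fun i hi => hc (Nat.lt_succ_iff.mp (mem_range.mp hi))

theorem eventually_mul_sqrt_le_one (C p : ℝ) :
    ∀ᶠ k : ℕ in atTop, ∀ c : ℕ → ℝ, Antitone c →
      (∀ n : ℕ, ∑ i ∈ range n, c i ≤ C * log (2 * n + 2) ^ p) → c k * √(k + 1) ≤ 1 := by
  have hlim : Tendsto (fun k : ℕ => 2 * (k : ℝ) + 4) atTop atTop :=
    tendsto_atTop_add_const_right _ _ <|
      tendsto_natCast_atTop_atTop.const_mul_atTop two_pos
  filter_upwards [hlim.eventually (eventually_mul_log_rpow_le_sqrt C p)] with k hlog c hc hs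
  have hsum := (hc.succ_mul_le_sum_range k).trans (hs (k + 1))
  have hsqrt : √(2 * k + 4) ≤ 2 * √(k + 1) := by
    rw [sqrt_le_iff, mul_pow, sq_sqrt (by positivity)]
    exact ⟨by positivity, by linarith⟩
  have hck : (k + 1) * c k ≤ √(k + 1) := by
    have : 2 * ((k : ℝ) + 1) + 2 = 2 * k + 4 := by ring
    push_cast at hsum
    rw [this] at hsum
    linarith
  have hk1 : 0 < √((k : ℝ) + 1) := sqrt_pos.2 (by positivity)
  have hsq := mul_self_sqrt (show (0 : ℝ) ≤ k + 1 by positivity)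
  by_contra! h
  nlinarith [mul_lt_mul_of_pos_left h hk1]

theorem sum_range_eq_add_sum_Ico_blocks {M : Type*} [AddCommMonoid M] (f : ℕ → M) {n : ℕ → ℕ}
    (hn : Monotone n) {m₀ m : ℕ} (h : m₀ ≤ m) :
    ∑ k ∈ range (n m), f k =
      ∑ k ∈ range (n m₀), f k +
        ∑ i ∈ Finset.Ico m₀ m, ∑ k ∈ Finset.Ico (n i) (n (i + 1)), f k := by
  induction m, h using Nat.le_induction with
  | base => simp
  | succ m hm ih =>
    rw [sum_Ico_succ_top hm, ← add_assoc, ← ih, sum_range_add_sum_Ico _ (hn m.le_succ)]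

theorem sum_Ico_sq_le_mul_log_rpow {f c : ℕ → ℝ} {C p q : ℝ} (hC : 0 ≤ C) (hp : 0 ≤ p)
    (hq : 0 ≤ q) (hc0 : ∀ k, 0 ≤ c k) (hs : ∀ n : ℕ, ∑ k ∈ range n, c k ≤ C * log (2 * n + 2) ^ p)
    {n : ℕ} (hn : 2 ≤ n) (hf : ∀ k ∈ Finset.Ico n (n ^ 2), f k ≤ c k / (log (k + 1) / 2) ^ q) :
    ∑ k ∈ Finset.Ico n (n ^ 2), f k ≤ C * 4 ^ p * 2 ^ q * log n ^ (p - q) := by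
  have hn' : (2 : ℝ) ≤ n := by exact_mod_cast hn
  have hlogn : 0 < log n := log_pos (by linarith)
  have hweight : ∀ k ∈ Finset.Ico n (n ^ 2),
      c k / (log (k + 1) / 2) ^ q ≤ c k / (log n / 2) ^ q := by
    intro k hk
    have : (n : ℝ) ≤ k := by exact_mod_cast (Finset.mem_Ico.1 hk).1
    have := hc0 k
    gcongr
    linarith
  have hlog : log (2 * ((n ^ 2 : ℕ) : ℝ) + 2) ≤ 4 * log n := by
    rw [show 4 * log n = log (n ^ 4) by rw [log_pow]; norm_num]
    gcongr
    push_cast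
    nlinarith [mul_le_mul hn' hn' (by norm_num) (by linarith)]
  calc ∑ k ∈ Finset.Ico n (n ^ 2), f k
      ≤ ∑ k ∈ Finset.Ico n (n ^ 2), c k / (log n / 2) ^ q :=
        sum_le_sum fun k hk => (hf k hk).trans (hweight k hk)
    _ = (∑ k ∈ Finset.Ico n (n ^ 2), c k) / (log n / 2) ^ q := by rw [sum_div]
    _ ≤ (∑ k ∈ range (n ^ 2), c k) / (log n / 2) ^ q := by
        gcongr
        · exact fun k _ _ => hc0 k
        · exact fun k hk => mem_range.2 (Finset.mem_Ico.1 hk).2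
    _ ≤ C * log (2 * ((n ^ 2 : ℕ) : ℝ) + 2) ^ p / (log n / 2) ^ q := by gcongr; exact hs _
    _ ≤ C * (4 * log n) ^ p / (log n / 2) ^ q := by
        gcongr
        exact log_nonneg (by linarith [(n ^ 2 : ℕ).cast_nonneg (α := ℝ)])
    _ = C * 4 ^ p * 2 ^ q * log n ^ (p - q) := by
        rw [mul_rpow (by norm_num) hlogn.le, div_rpow hlogn.le (by norm_num), rpow_sub hlogn]
        field_simp

theorem le_two_pow_two_pow (n : ℕ) : n ≤ 2 ^ 2 ^ n :=
  Nat.lt_two_pow_self.le.trans <| Nat.pow_le_pow_right two_pos Nat.lt_two_pow_self.le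

theorem monotone_two_pow_two_pow : Monotone fun m : ℕ => 2 ^ 2 ^ m :=
  fun _ _ h => Nat.pow_le_pow_right two_pos (Nat.pow_le_pow_right two_pos h)

theorem log_two_pow_two_pow_rpow (m : ℕ) (s : ℝ) :
    log ((2 ^ 2 ^ m : ℕ) : ℝ) ^ s = log 2 ^ s * (2 ^ s) ^ m := by
  rw [Nat.cast_pow, Nat.cast_ofNat, log_pow, Nat.cast_pow, Nat.cast_ofNat,
    mul_rpow (by positivity) (log_nonneg one_le_two), ← rpow_natCast 2 m,
    ← rpow_mul zero_le_two, mul_comm _ s, rpow_mul_natCast zero_le_two, mul_comm]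

theorem IsVarGauge.eventually_le_div_log_rpow {Φ : ℝ → ℝ} {p q C : ℝ} (hΦ : IsVarGauge q Φ)
    (hq : 0 ≤ q) :
    ∀ᶠ k : ℕ in atTop, ∀ c : ℕ → ℝ, Antitone c → (∀ k, 0 ≤ c k) →
      (∀ n : ℕ, ∑ i ∈ range n, c i ≤ C * log (2 * n + 2) ^ p) →
      Φ (c k) ≤ c k / (log (k + 1) / 2) ^ q := by
  obtain ⟨t₀, ht₀, hΦle⟩ := hΦ.exists_le_div_log_rpow hq
  have hsqrt : Tendsto (fun k : ℕ => √((k : ℝ) + 1)) atTop atTop :=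
    tendsto_sqrt_atTop.comp <| tendsto_atTop_add_const_right _ _ tendsto_natCast_atTop_atTop
  filter_upwards [eventually_mul_sqrt_le_one C p, hsqrt.eventually_ge_atTop t₀⁻¹,
    eventually_ge_atTop 1] with k hck ht hk1 c hc hc0 hs
  have hsq : 1 < √((k : ℝ) + 1) := by
    rw [lt_sqrt zero_le_one]
    have : (1 : ℝ) ≤ k := by exact_mod_cast hk1
    linarith
  rw [← log_sqrt (by positivity)]
  refine hΦle _ _ (hc0 k) ?_ hsq (hck c hc hs)
  calc c k ≤ (√((k : ℝ) + 1))⁻¹ := by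
        rw [← one_div, le_div_iff₀ (by linarith)]
        exact hck c hc hs
    _ ≤ t₀ := inv_le_of_inv_le₀ ht₀ ht

theorem IsVarGauge.exists_sum_le_of_sum_range_le {Φ : ℝ → ℝ} {p q C : ℝ} (hΦ : IsVarGauge q Φ)
    (hp : 0 ≤ p) (hpq : p < q) (hC : 0 ≤ C) :
    ∃ B, ∀ c : ℕ → ℝ, Antitone c → (∀ k, 0 ≤ c k) →
      (∀ n : ℕ, ∑ k ∈ range n, c k ≤ C * log (2 * n + 2) ^ p) →
      ∀ N, ∑ k ∈ range N, Φ (c k) ≤ B := by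
  have hq : 0 ≤ q := hp.trans hpq.le
  obtain ⟨K, hK⟩ := eventually_atTop.1 (hΦ.eventually_le_div_log_rpow (p := p) (C := C) hq)
  obtain ⟨-, hmono, hnonneg, -⟩ := hΦ
  set r : ℝ := 2 ^ (p - q)
  have hr0 : 0 ≤ r := by positivity
  have hr1 : r < 1 := rpow_lt_one_of_one_lt_of_neg one_lt_two (by linarith)
  set A := C * 4 ^ p * 2 ^ q * log 2 ^ (p - q)
  refine ⟨2 ^ 2 ^ K * Φ (C * log 4 ^ p) + A * (r ^ K / (1 - r)), fun c hc hc0 hs N => ?_⟩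
  have hhead : ∀ k, Φ (c k) ≤ Φ (C * log 4 ^ p) := by
    have h1 : c 0 ≤ C * log 4 ^ p := by simpa [show (2 : ℝ) + 2 = 4 by norm_num] using hs 1
    exact fun k => hmono (hc0 k) ((hc0 0).trans h1) ((hc (Nat.zero_le k)).trans h1)
  have hblock : ∀ m ≥ K,
      ∑ k ∈ Finset.Ico (2 ^ 2 ^ m) (2 ^ 2 ^ (m + 1)), Φ (c k) ≤ A * r ^ m := by
    intro m hm
    have hKm : K ≤ 2 ^ 2 ^ m := hm.trans (le_two_pow_two_pow m)
    rw [pow_succ, pow_mul]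
    refine (sum_Ico_sq_le_mul_log_rpow hC hp hq hc0 hs (Nat.le_self_pow (by positivity) 2)
      fun k hk => hK k (hKm.trans (Finset.mem_Ico.1 hk).1) c hc hc0 hs).trans_eq ?_
    rw [log_two_pow_two_pow_rpow]
    ring
  calc ∑ k ∈ range N, Φ (c k) ≤ ∑ k ∈ range (2 ^ 2 ^ (K + N)), Φ (c k) :=
        sum_le_sum_of_subset_of_nonneg
          (range_subset_range.2 <| (Nat.le_add_left N K).trans (le_two_pow_two_pow _))
          fun k _ _ => hnonneg _ (hc0 k)
    _ = ∑ k ∈ range (2 ^ 2 ^ K), Φ (c k) +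
          ∑ m ∈ Finset.Ico K (K + N), ∑ k ∈ Finset.Ico (2 ^ 2 ^ m) (2 ^ 2 ^ (m + 1)), Φ (c k) :=
        sum_range_eq_add_sum_Ico_blocks _ monotone_two_pow_two_pow (Nat.le_add_right K N)
    _ ≤ ∑ k ∈ range (2 ^ 2 ^ K), Φ (C * log 4 ^ p) + ∑ m ∈ Finset.Ico K (K + N), A * r ^ m := by
        gcongr with k _ m hm
        · exact hhead k
        · exact hblock m (Finset.mem_Ico.1 hm).1
    _ ≤ 2 ^ 2 ^ K * Φ (C * log 4 ^ p) + A * (r ^ K / (1 - r)) := by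
        rw [sum_const, card_range, nsmul_eq_mul, ← mul_sum]
        push_cast
        gcongr
        exact geom_sum_Ico_le_of_lt_one hr0 hr1

theorem finite_phi_variation_of_log_partition_bound_general
    (g : ℝ → ℝ) (a b : ℝ) (p C : ℝ) (hp : 0 < p) (hC : 0 < C)
    (h : ∀ (N : ℕ) (x : ℕ → ℝ), 1 ≤ N → x 0 = a → x N = b →
      (∀ j < N, x j < x (j + 1)) →
      ∑ j ∈ Finset.range N, |g (x (j + 1)) - g (x j)| ≤ C * Real.log (N + 1) ^ p) :
    ∀ q : ℝ, p < q → ∀ Φ : ℝ → ℝ, IsVarGauge q Φ → HasFinitePhiVariationOn Φ g a b := by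
  intro q hpq Φ hΦ
  obtain ⟨B, hB⟩ := hΦ.exists_sum_le_of_sum_range_le hp.le hpq hC.le
  refine ⟨B, fun N x _ hx0 hxN hx => ?_⟩
  obtain ⟨c, hc, hc0, hcΦ, hcsum⟩ := exists_antitone_rearrangement
    (fun j => |g (x (j + 1)) - g (x j)|) (fun _ => abs_nonneg _) N
  rw [← hcΦ Φ]
  refine hB c hc hc0 (fun n => ?_) N
  obtain ⟨T, hT, hTn, hTsum⟩ := hcsum n
  rw [hTsum]
  refine (sum_abs_sub_le_of_subset hC.le hp.le h N x hx0 hxN hx T hT).trans ?_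
  have : (#T : ℝ) ≤ n := by exact_mod_cast hTn
  gcongr C * log ?_ ^ p
  · exact log_nonneg (by linarith [(#T).cast_nonneg (α := ℝ)])
  · linarith

/-- If the sums `Σ |g(x_j) − g(x_{j−1})|` over all `N`-point partitions of `[a, b]` are
bounded by `C (log(N+1))^p`, then `g` has finite `Φ_q`-variation for every `q > p`. -/
theorem finite_phi_variation_of_log_partition_bound
    (g : ℝ → ℝ) (a b : ℝ) (hab : a < b) (p C : ℝ) (hp : 0 < p) (hC : 0 < C)
    (h : ∀ (N : ℕ) (x : ℕ → ℝ), 1 ≤ N → x 0 = a → x N = b →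
      (∀ j < N, x j < x (j + 1)) →
      ∑ j ∈ Finset.range N, |g (x (j + 1)) - g (x j)| ≤ C * Real.log (N + 1) ^ p) :
    ∀ q : ℝ, p < q → ∀ Φ : ℝ → ℝ, IsVarGauge q Φ → HasFinitePhiVariationOn Φ g a b :=
  finite_phi_variation_of_log_partition_bound_general g a b p C hp hC h
end

section
/- Let μ be a nonatomic positive Radon measure on ℝ and let g : ℝ → ℝ be a continuous function satisfying |g(x+h) − 2g(x) + g(x−h)| ≤ M μ([x−h, x+h]) for all x ∈ ℝ and h ≥ 0. Then for all a < b and all x ∈ [a,b], |g(x) − g_{ab}(x)| ≤ M μ([a,b]), where g_{ab}(x) = ((b−x)/(b−a)) g(a) + ((x−a)/(b−a)) g(b) is the affine function agreeing with g at a and b. -/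
/-!
`F = g - g_{ab}` vanishes at `a` and `b` and has the same second differences as `g`, which on
subintervals of `[a, b]` are bounded by `K = M μ([a, b])`. At a point `c` where `F` attains its
maximum on `[a, b]`, the symmetric second difference with step equal to the distance from `c` to
the nearer endpoint gives `-K ≤ F(c ± h) - 2 F(c) + 0 ≤ -F(c)`, so `F ≤ K`; likewise `-F ≤ K`.
-/

open MeasureTheory Set

section MaximumPrinciple

variable {a b K : ℝ} {F : ℝ → ℝ}

lemma le_of_secondDiff_ge (hab : a ≤ b) (hF : ContinuousOn F (Icc a b))
    (hFa : F a ≤ 0) (hFb : F b ≤ 0)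
    (hsec : ∀ x h : ℝ, 0 ≤ h → a ≤ x - h → x + h ≤ b →
      -K ≤ F (x + h) - 2 * F x + F (x - h)) :
    ∀ y ∈ Icc a b, F y ≤ K := by
  obtain ⟨c, ⟨hac, hcb⟩, hmax⟩ := isCompact_Icc.exists_isMaxOn (nonempty_Icc.2 hab) hF
  intro y hy
  suffices F c ≤ K from (hmax hy).trans this
  rcases le_total (c - a) (b - c) with hnear | hnear
  · have hsec_c := hsec c (c - a) (by linarith) (by linarith) (by linarith)
    have hright : F (c + (c - a)) ≤ F c := hmax ⟨by linarith, by linarith⟩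
    rw [sub_sub_cancel] at hsec_c
    linarith
  · have hsec_c := hsec c (b - c) (by linarith) (by linarith) (by linarith)
    have hleft : F (c - (b - c)) ≤ F c := hmax ⟨by linarith, by linarith⟩
    rw [add_sub_cancel] at hsec_c
    linarith

lemma abs_le_of_abs_secondDiff_le (hab : a ≤ b) (hF : ContinuousOn F (Icc a b))
    (hFa : F a = 0) (hFb : F b = 0)
    (hsec : ∀ x h : ℝ, 0 ≤ h → a ≤ x - h → x + h ≤ b →
      |F (x + h) - 2 * F x + F (x - h)| ≤ K) :
    ∀ y ∈ Icc a b, |F y| ≤ K := by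
  intro y hy
  have hupper := le_of_secondDiff_ge hab hF hFa.le hFb.le
    (fun x h hh hxa hxb => neg_le_of_abs_le (hsec x h hh hxa hxb)) y hy
  have hlower := le_of_secondDiff_ge (K := K) (F := fun t => -F t) hab hF.neg (by simp [hFa])
    (by simp [hFb])
    (fun x h hh hxa hxb => by
      have := le_abs_self (F (x + h) - 2 * F x + F (x - h))
      linarith [hsec x h hh hxa hxb]) y hy
  exact abs_le.2 ⟨by linarith, hupper⟩

end MaximumPrinciple

section AffineInterp

/-- The affine interpolant `g_{ab}` of `g` between `a` and `b`. -/
noncomputable def affineInterp (g : ℝ → ℝ) (a b x : ℝ) : ℝ :=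
  (b - x) / (b - a) * g a + (x - a) / (b - a) * g b

variable {g : ℝ → ℝ} {a b : ℝ}

lemma affineInterp_left (hab : a ≠ b) : affineInterp g a b a = g a := by
  have : b - a ≠ 0 := sub_ne_zero.2 hab.symm
  simp [affineInterp, this]

lemma affineInterp_right (hab : a ≠ b) : affineInterp g a b b = g b := by
  have : b - a ≠ 0 := sub_ne_zero.2 hab.symm
  simp [affineInterp, this]

lemma continuous_affineInterp : Continuous (affineInterp g a b) := by
  unfold affineInterp
  fun_prop

lemma affineInterp_secondDiff (x h : ℝ) :
    affineInterp g a b (x + h) - 2 * affineInterp g a b x + affineInterp g a b (x - h) = 0 := by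
  unfold affineInterp
  ring

lemma sub_affineInterp_secondDiff (x h : ℝ) :
    (g (x + h) - affineInterp g a b (x + h)) - 2 * (g x - affineInterp g a b x)
      + (g (x - h) - affineInterp g a b (x - h)) = g (x + h) - 2 * g x + g (x - h) := by
  linear_combination -affineInterp_secondDiff (g := g) (a := a) (b := b) x h

end AffineInterp

theorem genZygmund_affine_deviation_general
    (μ : Measure ℝ) [IsLocallyFiniteMeasure μ]
    (g : ℝ → ℝ) (hg : Continuous g) (M : ℝ) (hM : 0 < M)
    (hzyg : ∀ x h : ℝ, 0 ≤ h →
      |g (x + h) - 2 * g x + g (x - h)| ≤ M * (μ (Icc (x - h) (x + h))).toReal) :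
    ∀ a b x : ℝ, a < b → x ∈ Icc a b →
      |g x - ((b - x) / (b - a) * g a + (x - a) / (b - a) * g b)| ≤
        M * (μ (Icc a b)).toReal := by
  intro a b x hab hx
  refine abs_le_of_abs_secondDiff_le (F := fun t => g t - affineInterp g a b t) hab.le
    (hg.sub continuous_affineInterp).continuousOn
    (by simp [affineInterp_left hab.ne]) (by simp [affineInterp_right hab.ne]) ?_ x hx
  intro y h hh hya hyb
  rw [sub_affineInterp_secondDiff]
  calc |g (y + h) - 2 * g y + g (y - h)|
      ≤ M * μ.real (Icc (y - h) (y + h)) := hzyg y h hh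
    _ ≤ M * μ.real (Icc a b) := by gcongr; exact measure_Icc_lt_top.ne

/-- If `g` satisfies the generalized Zygmund condition with constant `M` relative to a
nonatomic Radon measure `μ`, then on every interval `[a, b]` the deviation of `g` from the
affine interpolant `g_{ab}` is at most `M μ([a, b])`. -/
theorem genZygmund_affine_deviation
    (μ : Measure ℝ) [IsLocallyFiniteMeasure μ] (hna : ∀ x : ℝ, μ {x} = 0)
    (g : ℝ → ℝ) (hg : Continuous g) (M : ℝ) (hM : 0 < M)
    (hzyg : ∀ x h : ℝ, 0 ≤ h →
      |g (x + h) - 2 * g x + g (x - h)| ≤ M * (μ (Icc (x - h) (x + h))).toReal) :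
    ∀ a b x : ℝ, a < b → x ∈ Icc a b →
      |g x - ((b - x) / (b - a) * g a + (x - a) / (b - a) * g b)| ≤
        M * (μ (Icc a b)).toReal :=
  genZygmund_affine_deviation_general μ g hg M hM hzyg
end

section
/- Let g : ℝ → ℝ belong to the Zygmund class Λ_* with seminorm at most M. Then there exists a constant C, depending only on M, such that for every triple a < x < b one has (g(x) − g(a))²/(x − a) + (g(x) − g(b))²/(b − x) ≤ (g(b) − g(a))²/(b − a) + C (b − a). -/
/-!
Write `p = x - a` and `q = b - x`. Clearing denominators, the inequality asks for
`(q (g x - g a) + p (g x - g b))² ≤ C p q (p + q)²`, where the defect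
`q (g x - g a) + p (g x - g b)` is `p q` times the jump of the slope of `g` at `x` between the
scales `p` and `q`.

A maximum-principle argument shows that a continuous Zygmund function stays within `M H` of its
chord over any interval of length `H`; this compares slopes at two comparable scales. For
`p ≤ q`, pick `h = q / 2ⁿ ∈ [p, 2p)`: the `n` halvings from `q` to `h` each change the slope at `x`
by at most `M`, so the slope jump is at most `(n + 4) M`, and `(n + 4)² ≤ 16 · 2ⁿ ≤ 16 q / p`
absorbs the logarithmic loss. The case `q ≤ p` follows by reflecting `g`.
-/

open Set

theorem abs_le_of_abs_second_diff_le {f : ℝ → ℝ} {a b K : ℝ} (hf : ContinuousOn f (Icc a b))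
    (ha : f a = 0) (hb : f b = 0) (hK : 0 ≤ K)
    (hdiff : ∀ c e, 0 ≤ e → a ≤ c - e → c + e ≤ b → |f (c + e) - 2 * f c + f (c - e)| ≤ K * e)
    {t : ℝ} (ht : t ∈ Icc a b) : |f t| ≤ K * (b - a) / 2 := by
  obtain ⟨c, ⟨hac, hcb⟩, hmax⟩ := isCompact_Icc.exists_isMaxOn (nonempty_of_mem ht) hf.abs
  -- Reflecting through `c` as far as the interval allows reaches an endpoint, where `f` vanishes.
  set e := min (c - a) (b - c)
  have he : 0 ≤ e := le_min (sub_nonneg.2 hac) (sub_nonneg.2 hcb)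
  have hea : e ≤ c - a := min_le_left _ _
  have heb : e ≤ b - c := min_le_right _ _
  have hend : |f (c + e) + f (c - e)| ≤ |f c| := by
    have hminus : |f (c - e)| ≤ |f c| := hmax ⟨by linarith, by linarith⟩
    have hplus : |f (c + e)| ≤ |f c| := hmax ⟨by linarith, by linarith⟩
    have : c - e = a ∨ c + e = b := by
      rcases min_choice (c - a) (b - c) with h | h
      · left; linarith
      · right; linarith
    rcases this with h | h
    · rwa [h, ha, add_zero]
    · rwa [h, hb, zero_add]
  have hc : |f c| ≤ K * e := by
    have hsecond := hdiff c e he (by linarith) (by linarith)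
    have h2 : |2 * f c| ≤ |f (c + e) + f (c - e)| + |f (c + e) - 2 * f c + f (c - e)| := by
      simpa using abs_sub (f (c + e) + f (c - e)) (f (c + e) - 2 * f c + f (c - e))
    rw [abs_mul, abs_two] at h2
    linarith
  calc |f t| ≤ |f c| := hmax ht
    _ ≤ K * e := hc
    _ ≤ K * (b - a) / 2 := by nlinarith

theorem Nat.add_four_sq_le (n : ℕ) : (n + 4) ^ 2 ≤ 16 * 2 ^ n := by
  induction n with
  | zero => norm_num
  | succ n ih =>
    have : (n + 1 + 4) ^ 2 ≤ 2 * (n + 4) ^ 2 := by ring_nf; omega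
    rw [pow_succ 2 n]
    omega

def IsZygmund (M : ℝ) (g : ℝ → ℝ) : Prop :=
  ∀ x h : ℝ, 0 < h → |g (x + h) - 2 * g x + g (x - h)| ≤ 2 * M * h

namespace IsZygmund

variable {M : ℝ} {g : ℝ → ℝ}

theorem nonneg (hg : IsZygmund M g) : 0 ≤ M := by
  have := (abs_nonneg _).trans (hg 0 1 one_pos)
  linarith

theorem abs_second_diff_le (hg : IsZygmund M g) (x : ℝ) {h : ℝ} (hh : 0 ≤ h) :
    |g (x + h) - 2 * g x + g (x - h)| ≤ 2 * M * h := by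
  rcases hh.eq_or_lt with rfl | hh
  · rw [add_zero, sub_zero, mul_zero, sub_add_eq_add_sub, ← two_mul, sub_self, abs_zero]
  · exact hg x h hh

theorem comp_neg (hg : IsZygmund M g) : IsZygmund M (fun t => g (-t)) := by
  intro x h hh
  convert hg (-x) h hh using 2
  simp only [neg_add', neg_sub', sub_neg_eq_add, add_comm (-x) h]
  ring

theorem abs_chord_sub_le (hg : IsZygmund M g) (hc : Continuous g) (y : ℝ) {t H : ℝ}
    (ht : 0 ≤ t) (htH : t ≤ H) :
    |H * (g (y + t) - g y) - t * (g (y + H) - g y)| ≤ M * H ^ 2 := by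
  have hH : 0 ≤ H := ht.trans htH
  set D : ℝ → ℝ := fun s => H * (g (y + s) - g y) - s * (g (y + H) - g y)
  have hD : ContinuousOn D (Icc 0 H) := by fun_prop
  have hdiff : ∀ c e, 0 ≤ e → 0 ≤ c - e → c + e ≤ H →
      |D (c + e) - 2 * D c + D (c - e)| ≤ 2 * M * H * e := by
    intro c e he _ _
    have hlin : D (c + e) - 2 * D c + D (c - e) =
        H * (g (y + c + e) - 2 * g (y + c) + g (y + c - e)) := by
      simp only [D, ← add_assoc, ← add_sub_assoc]; ring
    rw [hlin, abs_mul, abs_of_nonneg hH]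
    calc H * |g (y + c + e) - 2 * g (y + c) + g (y + c - e)| ≤ H * (2 * M * e) :=
          mul_le_mul_of_nonneg_left (hg.abs_second_diff_le _ he) hH
      _ = 2 * M * H * e := by ring
  have := abs_le_of_abs_second_diff_le hD (by simp [D]) (by simp [D])
    (by have := hg.nonneg; positivity) hdiff ⟨ht, htH⟩
  simpa [D, sq, mul_assoc] using this

theorem abs_sub_two_pow_mul_le (hg : IsZygmund M g) (y : ℝ) {h : ℝ} (hh : 0 ≤ h) (n : ℕ) :
    |g (y + 2 ^ n * h) - g y - 2 ^ n * (g (y + h) - g y)| ≤ n * M * (2 ^ n * h) := by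
  induction n with
  | zero => simp
  | succ n ih =>
    set s := 2 ^ n * h
    have hs : 0 ≤ s := by positivity
    have hdouble := hg.abs_second_diff_le (y + s) hs
    rw [add_sub_cancel_right, add_assoc, ← two_mul] at hdouble
    have hsplit : g (y + 2 ^ (n + 1) * h) - g y - 2 ^ (n + 1) * (g (y + h) - g y) =
        (g (y + 2 * s) - 2 * g (y + s) + g y) +
          2 * (g (y + s) - g y - 2 ^ n * (g (y + h) - g y)) := by
      simp only [s]; ring_nf
    calc _ ≤ |g (y + 2 * s) - 2 * g (y + s) + g y| +
          2 * |g (y + s) - g y - 2 ^ n * (g (y + h) - g y)| := by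
          rw [hsplit, ← abs_two, ← abs_mul, abs_two]; exact abs_add_le _ _
      _ ≤ 2 * M * s + 2 * (n * M * s) := by gcongr
      _ = (n + 1 : ℕ) * M * (2 ^ (n + 1) * h) := by push_cast; ring

theorem abs_defect_le_of_two_pow_mul (hg : IsZygmund M g) (hc : Continuous g) (x : ℝ) {p h : ℝ}
    (hp : 0 ≤ p) (hph : p ≤ h) (hhp : h ≤ 2 * p) (n : ℕ) :
    |2 ^ n * h * (g x - g (x - p)) + p * (g x - g (x + 2 ^ n * h))| ≤
      (n + 4) * M * p * (2 ^ n * h) := by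
  set q := 2 ^ n * h
  have hM := hg.nonneg
  have hchord := hg.abs_chord_sub_le hc (x - h) (sub_nonneg.2 hph) (sub_le_self h hp)
  rw [sub_add_sub_cancel, sub_add_cancel] at hchord
  have hsecond := hg.abs_second_diff_le x (hp.trans hph)
  have hchain := hg.abs_sub_two_pow_mul_le x (hp.trans hph) n
  have hsplit : q * (g x - g (x - p)) + p * (g x - g (x + q)) =
      -(2 ^ n * (h * (g (x - p) - g (x - h)) - (h - p) * (g x - g (x - h)))
        + 2 ^ n * p * (g (x + h) - 2 * g x + g (x - h))
        + p * (g (x + q) - g x - 2 ^ n * (g (x + h) - g x))) := by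
    simp only [q]; ring
  have hq : 0 ≤ q := by have := hp.trans hph; positivity
  have hhq : M * h * q ≤ M * (2 * p) * q := by gcongr
  calc _ ≤ 2 ^ n * (M * h ^ 2) + 2 ^ n * p * (2 * M * h) + p * (n * M * q) := by
        rw [hsplit, abs_neg]
        refine (abs_add_le _ _).trans
          (add_le_add ((abs_add_le _ _).trans (add_le_add ?_ ?_)) ?_) <;>
          rw [abs_mul, abs_of_nonneg (by positivity)] <;> gcongr
    _ = M * h * q + 2 * M * p * q + n * M * p * q := by ring
    _ ≤ (n + 4) * M * p * q := by linarith

theorem sq_defect_le_of_le (hg : IsZygmund M g) (hc : Continuous g) (x : ℝ) {p q : ℝ}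
    (hp : 0 < p) (hpq : p ≤ q) :
    (q * (g x - g (x - p)) + p * (g x - g (x + q))) ^ 2 ≤ 16 * M ^ 2 * p * q ^ 3 := by
  obtain ⟨n, hlo, hhi⟩ := exists_nat_pow_near ((one_le_div hp).2 hpq) one_lt_two
  rw [le_div_iff₀ hp] at hlo
  rw [div_lt_iff₀ hp, pow_succ, mul_assoc] at hhi
  have h2n : (0 : ℝ) < 2 ^ n := by positivity
  have hbound := hg.abs_defect_le_of_two_pow_mul hc x hp.le
    ((le_div_iff₀' h2n).2 hlo) ((div_le_iff₀' h2n).2 hhi.le) n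
  rw [mul_div_cancel₀ q h2n.ne'] at hbound
  have hpow : ((n : ℝ) + 4) ^ 2 ≤ 16 * 2 ^ n := by exact_mod_cast Nat.add_four_sq_le n
  calc _ = |q * (g x - g (x - p)) + p * (g x - g (x + q))| ^ 2 := (sq_abs _).symm
    _ ≤ ((n + 4) * M * p * q) ^ 2 := pow_le_pow_left₀ (abs_nonneg _) hbound 2
    _ = (n + 4) ^ 2 * (M ^ 2 * p ^ 2 * q ^ 2) := by ring
    _ ≤ 16 * 2 ^ n * (M ^ 2 * p ^ 2 * q ^ 2) := by gcongr
    _ = 16 * (2 ^ n * p) * (M ^ 2 * p * q ^ 2) := by ring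
    _ ≤ 16 * q * (M ^ 2 * p * q ^ 2) := by gcongr
    _ = 16 * M ^ 2 * p * q ^ 3 := by ring

theorem sq_defect_le (hg : IsZygmund M g) (hc : Continuous g) (x : ℝ) {p q : ℝ}
    (hp : 0 < p) (hq : 0 < q) :
    (q * (g x - g (x - p)) + p * (g x - g (x + q))) ^ 2 ≤
      16 * M ^ 2 * p * q * (p + q) ^ 2 := by
  rcases le_total p q with hpq | hqp
  · calc _ ≤ 16 * M ^ 2 * p * q * q ^ 2 := by
          simpa [pow_succ, mul_assoc] using hg.sq_defect_le_of_le hc x hp hpq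
      _ ≤ _ := by gcongr; linarith
  · have := hg.comp_neg.sq_defect_le_of_le (hc.comp continuous_neg) (-x) hq hqp
    simp only [neg_neg, neg_sub', sub_neg_eq_add, neg_add'] at this
    calc _ = (p * (g x - g (x + q)) + q * (g x - g (x - p))) ^ 2 := by ring
      _ ≤ 16 * M ^ 2 * q * p ^ 3 := this
      _ = 16 * M ^ 2 * p * q * p ^ 2 := by ring
      _ ≤ _ := by gcongr; linarith

end IsZygmund

theorem sq_div_add_sq_div {p q : ℝ} (hp : p ≠ 0) (hq : q ≠ 0) (hpq : p + q ≠ 0) (u v : ℝ) :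
    u ^ 2 / p + v ^ 2 / q = (u - v) ^ 2 / (p + q) + (q * u + p * v) ^ 2 / (p * q * (p + q)) := by
  field_simp
  ring

theorem zygmund_quadratic_inequality_general (M : ℝ) :
    ∃ C : ℝ, ∀ g : ℝ → ℝ, Continuous g →
      (∀ x h : ℝ, 0 < h → |g (x + h) - 2 * g x + g (x - h)| ≤ 2 * M * h) →
      ∀ a x b : ℝ, a < x → x < b →
        (g x - g a) ^ 2 / (x - a) + (g x - g b) ^ 2 / (b - x) ≤
          (g b - g a) ^ 2 / (b - a) + C * (b - a) := by
  refine ⟨16 * M ^ 2, fun g hc hg a x b hax hxb => ?_⟩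
  have hp : 0 < x - a := sub_pos.2 hax
  have hq : 0 < b - x := sub_pos.2 hxb
  have hba : x - a + (b - x) = b - a := sub_add_sub_cancel' x a b
  have hdefect := IsZygmund.sq_defect_le hg hc x hp hq
  rw [sub_sub_cancel, add_sub_cancel, hba] at hdefect
  rw [sq_div_add_sq_div hp.ne' hq.ne' (add_pos hp hq).ne', sub_sub_sub_cancel_left, hba,
    add_le_add_iff_left, div_le_iff₀ (by rw [← hba]; positivity)]
  exact hdefect.trans_eq (by ring)

/-- For any `g` in the Zygmund class `Λ_*` with seminorm at most `M` there is a constant `C`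
depending only on `M` such that for every triple `a < x < b`,
`(g(x)−g(a))²/(x−a) + (g(x)−g(b))²/(b−x) ≤ (g(b)−g(a))²/(b−a) + C(b−a)`. -/
theorem zygmund_quadratic_inequality (M : ℝ) (hM : 0 < M) :
    ∃ C : ℝ, ∀ g : ℝ → ℝ, Continuous g →
      (∀ x h : ℝ, 0 < h → |g (x + h) - 2 * g x + g (x - h)| ≤ 2 * M * h) →
      ∀ a x b : ℝ, a < x → x < b →
        (g x - g a) ^ 2 / (x - a) + (g x - g b) ^ 2 / (b - x) ≤
          (g b - g a) ^ 2 / (b - a) + C * (b - a) :=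
  zygmund_quadratic_inequality_general M
end

section
/- Let μ be a nonatomic positive Radon measure on ℝ and let g : ℝ → ℝ be a continuous function satisfying |g(x+h) − 2g(x) + g(x−h)| ≤ M μ([x−h, x+h]) for all x ∈ ℝ and h ≥ 0. Then for every triple a < x < b one has |g(x) − g(a)| + |g(x) − g(b)| ≤ |g(a) − g(b)| + 2M μ([a,b]). -/
/-!
Put `F y = |2 g(y) - g(a) - g(b)|`, so that `|g x - g a| + |g x - g b| = max (F x) |g a - g b|`.
Let `x₀` maximize `F` on `[a, b]` and reflect the nearer endpoint, say `a`, through `x₀`: the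
point `x' = 2x₀ - a` lies in `[a, b]`, and
`2 (2g(x₀) - g a - g b) = -2 (g x' - 2 g x₀ + g a) + (2 g x' - g a - g b) + (g a - g b)`.
The first term is a symmetric second difference inside `[a, b]`, bounded by `2M μ([a, b])`,
and the second is at most `F x₀` by maximality, so `F x₀ ≤ |g a - g b| + 2M μ([a, b])`.
-/

open MeasureTheory Set

lemma abs_add_abs_eq_max_abs_add_abs_sub {α : Type*} [AddCommGroup α] [LinearOrder α]
    [IsOrderedAddMonoid α] (s t : α) : |s| + |t| = max |s + t| |s - t| := by
  simp only [abs_eq_max_neg, add_max, max_add, neg_add, sub_eq_add_neg, neg_neg]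
  ac_rfl

lemma abs_two_mul_sub_sub_le_of_reflect {p q y z C : ℝ}
    (hmax : |2 * z - p - q| ≤ |2 * y - p - q|) (hsecond : |z - 2 * y + p| ≤ C) :
    |2 * y - p - q| ≤ |p - q| + 2 * C := by
  have hsplit : 2 * (2 * y - p - q) = -2 * (z - 2 * y + p) + (2 * z - p - q) + (p - q) := by
    ring
  have := abs_add_three (-2 * (z - 2 * y + p)) (2 * z - p - q) (p - q)
  rw [← hsplit, abs_mul, abs_mul, abs_neg, abs_two] at this
  linarith

lemma abs_two_mul_sub_sub_le_of_secondDiff_le {g : ℝ → ℝ} {a b C : ℝ} (hab : a ≤ b)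
    (hg : ContinuousOn g (Icc a b))
    (hC : ∀ x h, 0 ≤ h → a ≤ x - h → x + h ≤ b →
      |g (x + h) - 2 * g x + g (x - h)| ≤ C)
    {x : ℝ} (hx : x ∈ Icc a b) : |2 * g x - g a - g b| ≤ |g a - g b| + 2 * C := by
  have hF : ContinuousOn (fun y ↦ |2 * g y - g a - g b|) (Icc a b) := by fun_prop
  obtain ⟨x₀, hx₀, hmax⟩ := isCompact_Icc.exists_isMaxOn (nonempty_Icc.2 hab) hF
  refine (hmax hx).trans ?_
  dsimp only
  rcases le_total (x₀ - a) (b - x₀) with hnear | hnear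
  · refine abs_two_mul_sub_sub_le_of_reflect (z := g (2 * x₀ - a))
      (hmax ⟨by linarith [hx₀.1], by linarith⟩) ((le_of_eq ?_).trans
        (hC x₀ (x₀ - a) (by linarith [hx₀.1]) (by linarith) (by linarith)))
    ring_nf
  · have hswap : ∀ y, |2 * g y - g a - g b| = |2 * g y - g b - g a| := fun y ↦ by ring_nf
    have hmax' : |2 * g (2 * x₀ - b) - g b - g a| ≤ |2 * g x₀ - g b - g a| := by
      rw [← hswap, ← hswap]
      exact hmax ⟨by linarith, by linarith [hx₀.2]⟩
    rw [hswap, abs_sub_comm (g a)]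
    refine abs_two_mul_sub_sub_le_of_reflect hmax' ((le_of_eq ?_).trans
      (hC x₀ (b - x₀) (by linarith [hx₀.2]) (by linarith) (by linarith)))
    ring_nf

theorem genZygmund_triple_inequality_general
    (μ : Measure ℝ) [IsLocallyFiniteMeasure μ]
    (g : ℝ → ℝ) (hg : Continuous g) (M : ℝ) (hM : 0 < M)
    (hzyg : ∀ x h : ℝ, 0 ≤ h →
      |g (x + h) - 2 * g x + g (x - h)| ≤ M * (μ (Icc (x - h) (x + h))).toReal) :
    ∀ a x b : ℝ, a < x → x < b →
      |g x - g a| + |g x - g b| ≤ |g a - g b| + 2 * M * (μ (Icc a b)).toReal := by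
  intro a x b hax hxb
  have hC : ∀ y h, 0 ≤ h → a ≤ y - h → y + h ≤ b →
      |g (y + h) - 2 * g y + g (y - h)| ≤ M * (μ (Icc a b)).toReal := fun y h h0 ha hb =>
    (hzyg y h h0).trans <| by gcongr; exact measure_Icc_lt_top.ne
  calc |g x - g a| + |g x - g b|
      = max |2 * g x - g a - g b| |g a - g b| := by
        rw [abs_add_abs_eq_max_abs_add_abs_sub, abs_sub_comm (g x - g a)]
        congr 2 <;> ring
    _ ≤ |g a - g b| + 2 * (M * (μ (Icc a b)).toReal) :=
        max_le (abs_two_mul_sub_sub_le_of_secondDiff_le (hax.trans hxb).le hg.continuousOn hC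
          ⟨hax.le, hxb.le⟩) (le_add_of_nonneg_right (by positivity))
    _ = |g a - g b| + 2 * M * (μ (Icc a b)).toReal := by ring

/-- If `g` satisfies the generalized Zygmund condition with constant `M` relative to a
nonatomic Radon measure `μ`, then for every triple `a < x < b`,
`|g(x) − g(a)| + |g(x) − g(b)| ≤ |g(a) − g(b)| + 2M μ([a, b])`. -/
theorem genZygmund_triple_inequality
    (μ : Measure ℝ) [IsLocallyFiniteMeasure μ] (hna : ∀ x : ℝ, μ {x} = 0)
    (g : ℝ → ℝ) (hg : Continuous g) (M : ℝ) (hM : 0 < M)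
    (hzyg : ∀ x h : ℝ, 0 ≤ h →
      |g (x + h) - 2 * g x + g (x - h)| ≤ M * (μ (Icc (x - h) (x + h))).toReal) :
    ∀ a x b : ℝ, a < x → x < b →
      |g x - g a| + |g x - g b| ≤ |g a - g b| + 2 * M * (μ (Icc a b)).toReal :=
  genZygmund_triple_inequality_general μ g hg M hM hzyg
end

section
/- Fix γ ∈ (0,1). For n ≥ 1 define ρ_n : ℝ → ℝ by ρ_n(x) = 0 if ⌊4^n x⌋ ≡ 0 or 3 (mod 4), ρ_n(x) = 1 if ⌊4^n x⌋ ≡ 1 (mod 4), and ρ_n(x) = −1 if ⌊4^n x⌋ ≡ 2 (mod 4), and set v_n(x) = Π_{k=1}^n (1 + γ ρ_{2k−1}(x)). Then there exists a constant c > 0, depending only on γ, such that for every m ≥ 1, ∫_0^1 max_{1 ≤ n ≤ m} v_n(x) dx ≥ c m. -/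
/-!
Let `G_m = max_{0 ≤ n ≤ m} v_n` (with `v_0 = 1`). Since `ρ_{k+2}((x + s)/16) = ρ_k(x)` for `k ≥ 1`,
on each of the sixteen intervals `[s/16, (s+1)/16)` the function `G_{m+1}` is, after rescaling,
`max(1, g_s G_m)`, where `g_s = 1 + γ ρ_1` equals `1, 1 + γ, 1 − γ, 1` on the four quarters.
Averaging, `E G_{m+1} = E G_m + ¼ E[max(1, (1−γ) G_m) − (1−γ) G_m] ≥ E G_m + ¼ γ² P(G_m ≤ 1 + γ)`.
The same recursion applied to the distribution of `G_m` gives the maximal inequality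
`P(G_m ≤ A) ≥ 1 − 1/A` (the `v_n` form a mean-one martingale), so `E G_m` grows linearly,
and `max_{1 ≤ n ≤ m} v_n ≥ G_m − 1`.
-/

open Set

/-- The Rademacher-type function `ρ_n`: on the 4-adic interval `[j 4⁻ⁿ, (j+1) 4⁻ⁿ)` it equals
`0, 1, −1, 0` according to `j ≡ 0, 1, 2, 3 (mod 4)`. -/
noncomputable def rho (n : ℕ) (x : ℝ) : ℝ :=
  if ⌊(4 : ℝ) ^ n * x⌋ % 4 = 1 then 1
  else if ⌊(4 : ℝ) ^ n * x⌋ % 4 = 2 then -1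
  else 0

/-- The weight `v_n(x) = Π_{k=1}^n (1 + γ ρ_{2k−1}(x))`. -/
noncomputable def vweight (γ : ℝ) (n : ℕ) (x : ℝ) : ℝ :=
  ∏ k ∈ Finset.Icc 1 n, (1 + γ * rho (2 * k - 1) x)

open MeasureTheory intervalIntegral

theorem intervalIntegrable_of_abs_le {f : ℝ → ℝ} (hf : Measurable f) {C : ℝ}
    (hC : ∀ x, |f x| ≤ C) (a b : ℝ) : IntervalIntegrable f volume a b :=
  intervalIntegrable_const.mono_fun' hf.aestronglyMeasurable (ae_of_all _ hC)

theorem IntervalIntegrable.sup {f g : ℝ → ℝ} {a b : ℝ} (hf : IntervalIntegrable f volume a b)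
    (hg : IntervalIntegrable g volume a b) : IntervalIntegrable (f ⊔ g) volume a b :=
  intervalIntegrable_iff.2 <| (intervalIntegrable_iff.1 hf).sup (intervalIntegrable_iff.1 hg)

theorem sum_integral_comp_add_div {f : ℝ → ℝ} (hf : IntervalIntegrable f volume 0 1) (N : ℕ) :
    ∑ s ∈ Finset.range N, ∫ x in (0:ℝ)..1, f ((x + s) / N) = N * ∫ x in (0:ℝ)..1, f x := by
  rcases N.eq_zero_or_pos with rfl | hN
  · simp
  have hN' : (0 : ℝ) < N := by positivity
  have hpiece (s : ℕ) : ∫ x in (0:ℝ)..1, f ((x + s) / N)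
      = N * ∫ x in (s / N : ℝ)..((s + 1 : ℕ) : ℝ) / N, f x := by
    rw [eq_comm, ← eq_inv_mul_iff_mul_eq₀ hN'.ne']
    simp [add_div, add_comm]
  have hmem {k : ℕ} (hk : k ≤ N) : (k : ℝ) / N ∈ uIcc 0 1 :=
    mem_uIcc_of_le (by positivity) ((div_le_one hN').2 (by exact_mod_cast hk))
  rw [Finset.sum_congr rfl fun s _ => hpiece s, ← Finset.mul_sum,
    sum_integral_adjacent_intervals (a := fun k : ℕ => (k : ℝ) / N)]
  · simp [hN'.ne']
  · exact fun k hk => hf.mono_set (uIcc_subset_uIcc (hmem hk.le) (hmem hk))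

theorem abs_rho_le_one (n : ℕ) (x : ℝ) : |rho n x| ≤ 1 := by
  unfold rho; split_ifs <;> norm_num

theorem measurable_rho (n : ℕ) : Measurable (rho n) :=
  (measurable_of_countable fun z : ℤ =>
      if z % 4 = 1 then (1 : ℝ) else if z % 4 = 2 then -1 else 0).comp
    (Int.measurable_floor.comp (measurable_const.mul measurable_id))

theorem rho_add_two_add_div_sixteen {k : ℕ} (hk : 1 ≤ k) (s : ℕ) (x : ℝ) :
    rho (k + 2) ((x + s) / 16) = rho k x := by
  obtain ⟨j, rfl⟩ := Nat.exists_eq_add_of_le' hk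
  have h : (4 : ℝ) ^ (j + 1 + 2) * ((x + s) / 16) =
      4 ^ (j + 1) * x + ((4 * (4 ^ j * s) : ℤ) : ℝ) := by
    push_cast; ring
  simp only [rho, h, Int.floor_add_intCast, Int.add_mul_emod_self_left]

theorem rho_one_add_div_sixteen (s : ℕ) {x : ℝ} (hx : x ∈ Ico 0 1) :
    rho 1 ((x + s) / 16) = rho 1 (s / 16) := by
  have h (y : ℝ) : (4 : ℝ) ^ 1 * (y / 16) = y / (4 : ℕ) := by norm_num; ring
  have hfloor : ⌊(4 : ℝ) ^ 1 * ((x + s) / 16)⌋ = ⌊(4 : ℝ) ^ 1 * (s / 16)⌋ := by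
    rw [h, h, Int.floor_div_natCast, Int.floor_div_natCast, Int.floor_add_natCast,
      Int.floor_eq_zero_iff.2 hx, zero_add, Int.floor_natCast]
  simp only [rho, hfloor]

section Weights

variable {γ : ℝ}

theorem abs_one_add_mul_rho_le (n : ℕ) (x : ℝ) : |1 + γ * rho n x| ≤ 1 + |γ| := by
  calc |1 + γ * rho n x| ≤ 1 + |γ| * |rho n x| := by
        simpa [abs_mul] using abs_add_le 1 (γ * rho n x)
    _ ≤ 1 + |γ| := by gcongr; exact mul_le_of_le_one_right (abs_nonneg γ) (abs_rho_le_one n x)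

theorem one_add_mul_rho_nonneg (hγ : |γ| ≤ 1) (n : ℕ) (x : ℝ) : 0 ≤ 1 + γ * rho n x := by
  have h : |γ * rho n x| ≤ 1 := by
    rw [abs_mul]; exact mul_le_one₀ hγ (abs_nonneg _) (abs_rho_le_one n x)
  linarith [neg_abs_le (γ * rho n x)]

theorem vweight_zero (x : ℝ) : vweight γ 0 x = 1 := by simp [vweight]

theorem vweight_eq_prod_range (n : ℕ) (x : ℝ) :
    vweight γ n x = ∏ k ∈ Finset.range n, (1 + γ * rho (2 * k + 1) x) := by
  rw [vweight, ← Finset.Ico_add_one_right_eq_Icc, Finset.prod_Ico_eq_prod_range]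
  exact Finset.prod_congr (by simp) fun k _ => by congr 3; omega

theorem vweight_nonneg (hγ : |γ| ≤ 1) (n : ℕ) (x : ℝ) : 0 ≤ vweight γ n x :=
  Finset.prod_nonneg fun _ _ => one_add_mul_rho_nonneg hγ _ x

theorem abs_vweight_le (n : ℕ) (x : ℝ) : |vweight γ n x| ≤ (1 + |γ|) ^ n := by
  rw [vweight, Finset.abs_prod]
  calc ∏ k ∈ Finset.Icc 1 n, |1 + γ * rho (2 * k - 1) x| ≤ ∏ k ∈ Finset.Icc 1 n, (1 + |γ|) :=
        Finset.prod_le_prod (fun _ _ => abs_nonneg _) fun _ _ => abs_one_add_mul_rho_le _ x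
    _ = (1 + |γ|) ^ n := by simp

theorem measurable_vweight (n : ℕ) : Measurable (vweight γ n) :=
  Finset.measurable_prod _ fun _ _ => measurable_const.add (measurable_const.mul (measurable_rho _))

theorem vweight_succ_add_div_sixteen (n s : ℕ) {x : ℝ} (hx : x ∈ Ico 0 1) :
    vweight γ (n + 1) ((x + s) / 16) = (1 + γ * rho 1 (s / 16)) * vweight γ n x := by
  rw [vweight_eq_prod_range, vweight_eq_prod_range, Finset.prod_range_succ', mul_comm,
    mul_zero, zero_add, rho_one_add_div_sixteen s hx]
  congr 1
  refine Finset.prod_congr rfl fun k _ => ?_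
  rw [show 2 * (k + 1) + 1 = 2 * k + 1 + 2 by ring, rho_add_two_add_div_sixteen (by omega)]

end Weights

noncomputable def runningMax (γ : ℝ) : ℕ → ℝ → ℝ
  | 0, _ => 1
  | m + 1, x => max (runningMax γ m x) (vweight γ (m + 1) x)

section RunningMax

variable {γ : ℝ}

theorem vweight_le_runningMax {n m : ℕ} (hn : n ≤ m) (x : ℝ) :
    vweight γ n x ≤ runningMax γ m x := by
  induction m with
  | zero => rw [Nat.le_zero.1 hn, vweight_zero, runningMax]
  | succ m ih =>
    rcases Nat.of_le_succ hn with hn | rfl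
    · exact le_max_of_le_left (ih hn)
    · exact le_max_right _ _

theorem runningMax_le {m : ℕ} {x B : ℝ} (h : ∀ n ≤ m, vweight γ n x ≤ B) :
    runningMax γ m x ≤ B := by
  induction m with
  | zero => simpa [runningMax, vweight_zero] using h 0 le_rfl
  | succ m ih => exact max_le (ih fun n hn => h n (hn.trans m.le_succ)) (h _ le_rfl)

theorem one_le_runningMax (m : ℕ) (x : ℝ) : 1 ≤ runningMax γ m x :=
  vweight_zero (γ := γ) x ▸ vweight_le_runningMax m.zero_le x

theorem abs_runningMax_le (m : ℕ) (x : ℝ) : |runningMax γ m x| ≤ (1 + |γ|) ^ m := by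
  rw [abs_of_nonneg (zero_le_one.trans (one_le_runningMax m x))]
  exact runningMax_le fun n hn => (le_abs_self _).trans <| (abs_vweight_le n x).trans <|
    pow_le_pow_right₀ (by linarith [abs_nonneg γ]) hn

theorem measurable_runningMax (m : ℕ) : Measurable (runningMax γ m) := by
  induction m with
  | zero => exact measurable_const
  | succ m ih => exact ih.max (measurable_vweight _)

theorem intervalIntegrable_runningMax (m : ℕ) (a b : ℝ) :
    IntervalIntegrable (runningMax γ m) volume a b :=
  intervalIntegrable_of_abs_le (measurable_runningMax m) (abs_runningMax_le m) a b

theorem intervalIntegrable_ite_runningMax_le (m : ℕ) (A a b : ℝ) :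
    IntervalIntegrable (fun x => if runningMax γ m x ≤ A then (1 : ℝ) else 0) volume a b :=
  intervalIntegrable_of_abs_le
    ((measurable_const.ite measurableSet_Iic measurable_const).comp (measurable_runningMax m))
    (C := 1) (fun x => by dsimp only [Function.comp_apply]; split_ifs <;> norm_num) a b

theorem runningMax_succ_add_div_sixteen (hγ : |γ| ≤ 1) (m s : ℕ) {x : ℝ} (hx : x ∈ Ico 0 1) :
    runningMax γ (m + 1) ((x + s) / 16) =
      max 1 ((1 + γ * rho 1 (s / 16)) * runningMax γ m x) := by
  induction m with
  | zero => simp [runningMax, vweight_succ_add_div_sixteen 0 s hx, vweight_zero]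
  | succ m ih =>
    rw [runningMax, ih, vweight_succ_add_div_sixteen _ s hx, max_assoc, runningMax,
      mul_max_of_nonneg _ _ (one_add_mul_rho_nonneg hγ 1 _)]

end RunningMax

section Integrals

variable {γ : ℝ}

theorem integral_comp_runningMax_succ {ψ : ℝ → ℝ} (hγ0 : 0 ≤ γ) (hγ1 : γ ≤ 1) (m : ℕ)
    (hψ : IntervalIntegrable (fun x => ψ (runningMax γ (m + 1) x)) volume 0 1) :
    ∫ x in (0:ℝ)..1, ψ (runningMax γ (m + 1) x) =
      1 / 2 * (∫ x in (0:ℝ)..1, ψ (runningMax γ m x))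
        + 1 / 4 * (∫ x in (0:ℝ)..1, ψ ((1 + γ) * runningMax γ m x))
        + 1 / 4 * ∫ x in (0:ℝ)..1, ψ (max 1 ((1 - γ) * runningMax γ m x)) := by
  have hsplit := sum_integral_comp_add_div hψ 16
  have hpiece (s : ℕ) : ∫ x in (0:ℝ)..1, ψ (runningMax γ (m + 1) ((x + s) / (16 : ℕ))) =
      ∫ x in (0:ℝ)..1, ψ (max 1 ((1 + γ * rho 1 (s / 16)) * runningMax γ m x)) :=
    integral_congr_Ioo_of_le zero_le_one fun x hx => by
      rw [Nat.cast_ofNat, runningMax_succ_add_div_sixteen (abs_le.2 ⟨by linarith, hγ1⟩) m s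
        (Ioo_subset_Ico_self hx)]
  simp only [Finset.sum_range_succ, Finset.sum_range_zero, hpiece] at hsplit
  norm_num [rho, ← sub_eq_add_neg] at hsplit
  have hone : ∫ x in (0:ℝ)..1, ψ (max 1 (runningMax γ m x)) =
      ∫ x in (0:ℝ)..1, ψ (runningMax γ m x) :=
    integral_congr fun x _ => by rw [max_eq_right (one_le_runningMax m x)]
  have hplus : ∫ x in (0:ℝ)..1, ψ (max 1 ((1 + γ) * runningMax γ m x)) =
      ∫ x in (0:ℝ)..1, ψ ((1 + γ) * runningMax γ m x) :=
    integral_congr fun x _ => by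
      rw [max_eq_right (one_le_mul_of_one_le_of_one_le (by linarith) (one_le_runningMax m x))]
  rw [hone, hplus] at hsplit
  linarith

theorem integral_runningMax_add_le (hγ0 : 0 ≤ γ) (hγ1 : γ ≤ 1) (A : ℝ) (m : ℕ) :
    (∫ x in (0:ℝ)..1, runningMax γ m x)
        + (1 - (1 - γ) * A) / 4 * ∫ x in (0:ℝ)..1, (if runningMax γ m x ≤ A then 1 else 0)
      ≤ ∫ x in (0:ℝ)..1, runningMax γ (m + 1) x := by
  have hG := intervalIntegrable_runningMax (γ := γ) m 0 1
  have hind := intervalIntegrable_ite_runningMax_le (γ := γ) m A 0 1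
  have hlow : (1 - γ) * (∫ x in (0:ℝ)..1, runningMax γ m x)
        + (1 - (1 - γ) * A) * ∫ x in (0:ℝ)..1, (if runningMax γ m x ≤ A then 1 else 0)
      ≤ ∫ x in (0:ℝ)..1, max 1 ((1 - γ) * runningMax γ m x) := by
    rw [← intervalIntegral.integral_const_mul, ← intervalIntegral.integral_const_mul,
      ← integral_add (hG.const_mul _) (hind.const_mul _)]
    refine integral_mono_on zero_le_one ((hG.const_mul _).add (hind.const_mul _))
      (intervalIntegrable_const.sup (hG.const_mul _)) fun x _ => ?_
    split_ifs with hx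
    · have := mul_le_mul_of_nonneg_left hx (sub_nonneg.2 hγ1)
      exact le_max_of_le_left (by linarith)
    · exact le_max_of_le_right (by linarith)
  have hrec :=
    integral_comp_runningMax_succ (ψ := id) hγ0 hγ1 m (intervalIntegrable_runningMax _ 0 1)
  simp only [id, intervalIntegral.integral_const_mul] at hrec
  linarith

theorem one_sub_inv_le_integral_ite_runningMax_le (hγ0 : 0 ≤ γ) (hγ1 : γ < 1) (m : ℕ) {A : ℝ}
    (hA : 0 < A) : 1 - A⁻¹ ≤ ∫ x in (0:ℝ)..1, (if runningMax γ m x ≤ A then 1 else 0) := by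
  induction m generalizing A with
  | zero =>
    by_cases h : 1 ≤ A
    · simp [runningMax, h, hA.le]
    · simp [runningMax, h, (one_le_inv₀ hA).2 (not_le.1 h).le]
  | succ m ih =>
    rcases lt_or_ge A 1 with hA1 | hA1
    · exact (sub_nonpos.2 ((one_le_inv₀ hA).2 hA1.le)).trans
        (integral_nonneg zero_le_one fun x _ => by split_ifs <;> norm_num)
    have hdiv {c : ℝ} (hc : 0 < c) :
        ∫ x in (0:ℝ)..1, (if c * runningMax γ m x ≤ A then (1 : ℝ) else 0)
          = ∫ x in (0:ℝ)..1, (if runningMax γ m x ≤ A / c then 1 else 0) :=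
      integral_congr fun x _ => by simp only [le_div_iff₀ hc, mul_comm]
    have hmax : ∫ x in (0:ℝ)..1, (if max 1 ((1 - γ) * runningMax γ m x) ≤ A then (1 : ℝ) else 0)
        = ∫ x in (0:ℝ)..1, (if (1 - γ) * runningMax γ m x ≤ A then 1 else 0) :=
      integral_congr fun x _ => by simp only [max_le_iff, hA1, true_and]
    rw [integral_comp_runningMax_succ (ψ := fun t => if t ≤ A then 1 else 0) hγ0 hγ1.le m
      (intervalIntegrable_ite_runningMax_le _ _ 0 1), hmax, hdiv (by linarith),
      hdiv (by linarith)]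
    have h0 := ih hA
    have hplus := ih (div_pos hA (by linarith : (0 : ℝ) < 1 + γ))
    have hminus := ih (div_pos hA (by linarith : (0 : ℝ) < 1 - γ))
    rw [inv_div] at hplus hminus
    -- `A ↦ 1 - A⁻¹` is invariant under the recursion: the factors `1, 1 + γ, 1 - γ` average to `1`.
    have : 1 / 2 * (1 - A⁻¹) + 1 / 4 * (1 - (1 + γ) / A) + 1 / 4 * (1 - (1 - γ) / A)
        = 1 - A⁻¹ := by
      ring
    linarith

theorem integral_runningMax_ge (hγ0 : 0 ≤ γ) (hγ1 : γ < 1) (m : ℕ) :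
    1 + m * (γ ^ 3 / (4 * (1 + γ))) ≤ ∫ x in (0:ℝ)..1, runningMax γ m x := by
  induction m with
  | zero => simp [runningMax]
  | succ m ih =>
    have hmass := one_sub_inv_le_integral_ite_runningMax_le hγ0 hγ1 m (by linarith : 0 < 1 + γ)
    have hstep := integral_runningMax_add_le hγ0 hγ1.le (1 + γ) m
    have hprod := mul_le_mul_of_nonneg_left hmass (by positivity : 0 ≤ γ ^ 2 / 4)
    have hconst : γ ^ 2 / 4 * (1 - (1 + γ)⁻¹) = γ ^ 3 / (4 * (1 + γ)) := by
      field_simp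
      ring
    push_cast
    linarith

end Integrals

section MaxOverIcc

variable {γ : ℝ} {m : ℕ}

theorem sup'_vweight_le_runningMax (hm : 1 ≤ m) (x : ℝ) :
    (Finset.Icc 1 m).sup' (Finset.nonempty_Icc.mpr hm) (fun n => vweight γ n x) ≤
      runningMax γ m x :=
  Finset.sup'_le _ _ fun _ hn => vweight_le_runningMax (Finset.mem_Icc.1 hn).2 x

theorem sup'_vweight_nonneg (hγ : |γ| ≤ 1) (hm : 1 ≤ m) (x : ℝ) :
    0 ≤ (Finset.Icc 1 m).sup' (Finset.nonempty_Icc.mpr hm) (fun n => vweight γ n x) :=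
  (vweight_nonneg hγ 1 x).trans (Finset.le_sup' (fun n => vweight γ n x) (by simpa using hm))

theorem runningMax_le_one_add_sup' (hγ : |γ| ≤ 1) (hm : 1 ≤ m) (x : ℝ) :
    runningMax γ m x ≤
      1 + (Finset.Icc 1 m).sup' (Finset.nonempty_Icc.mpr hm) (fun n => vweight γ n x) := by
  refine runningMax_le fun n hnm => ?_
  rcases n.eq_zero_or_pos with rfl | hn
  · simpa [vweight_zero] using sup'_vweight_nonneg hγ hm x
  · exact le_add_of_nonneg_of_le zero_le_one
      (Finset.le_sup' (fun n => vweight γ n x) (Finset.mem_Icc.2 ⟨hn, hnm⟩))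

theorem intervalIntegrable_sup'_vweight (hγ : |γ| ≤ 1) (hm : 1 ≤ m) (a b : ℝ) :
    IntervalIntegrable
      (fun x => (Finset.Icc 1 m).sup' (Finset.nonempty_Icc.mpr hm) (fun n => vweight γ n x))
      volume a b := by
  have hsup : (Finset.Icc 1 m).sup' (Finset.nonempty_Icc.mpr hm) (fun n => vweight γ n) =
      fun x => (Finset.Icc 1 m).sup' (Finset.nonempty_Icc.mpr hm) (fun n => vweight γ n x) :=
    funext fun x => Finset.sup'_apply _ _ _
  refine intervalIntegrable_of_abs_le
    (hsup ▸ Finset.measurable_sup' _ fun n _ => measurable_vweight n) (C := (1 + |γ|) ^ m)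
    (fun x => ?_) a b
  rw [abs_of_nonneg (sup'_vweight_nonneg hγ hm x)]
  exact (sup'_vweight_le_runningMax hm x).trans ((le_abs_self _).trans (abs_runningMax_le m x))

theorem integral_runningMax_sub_one_le (hγ : |γ| ≤ 1) (hm : 1 ≤ m) :
    (∫ x in (0:ℝ)..1, runningMax γ m x) - 1 ≤
      ∫ x in (0:ℝ)..1,
        (Finset.Icc 1 m).sup' (Finset.nonempty_Icc.mpr hm) (fun n => vweight γ n x) := by
  have hG := intervalIntegrable_runningMax (γ := γ) m 0 1
  calc (∫ x in (0:ℝ)..1, runningMax γ m x) - 1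
        = ∫ x in (0:ℝ)..1, (runningMax γ m x - 1) := by
          simp [integral_sub hG intervalIntegrable_const]
    _ ≤ _ := integral_mono_on zero_le_one (hG.sub intervalIntegrable_const)
        (intervalIntegrable_sup'_vweight hγ hm 0 1)
        fun x _ => sub_le_iff_le_add'.2 (runningMax_le_one_add_sup' hγ hm x)

end MaxOverIcc

/-- For `γ ∈ (0,1)` there is `c > 0` (depending only on `γ`) such that
`∫_0^1 max_{1 ≤ n ≤ m} v_n(x) dx ≥ c m` for every `m ≥ 1`. -/
theorem integral_max_weight_lower_bound :
    ∀ γ : ℝ, 0 < γ → γ < 1 → ∃ c > 0, ∀ m : ℕ, ∀ hm : 1 ≤ m,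
      c * m ≤ ∫ x in (0:ℝ)..1,
        (Finset.Icc 1 m).sup' (Finset.nonempty_Icc.mpr hm) (fun n => vweight γ n x) := by
  intro γ hγ0 hγ1
  refine ⟨γ ^ 3 / (4 * (1 + γ)), by positivity, fun m hm => ?_⟩
  linarith [integral_runningMax_ge hγ0.le hγ1 m,
    integral_runningMax_sub_one_le (abs_le.2 ⟨by linarith, hγ1.le⟩) hm]
end

section
/- Fix γ ∈ (0,1). For n ≥ 1 define ρ_n : ℝ → ℝ by ρ_n(x) = 0 if ⌊4^n x⌋ ≡ 0 or 3 (mod 4), ρ_n(x) = 1 if ⌊4^n x⌋ ≡ 1 (mod 4), and ρ_n(x) = −1 if ⌊4^n x⌋ ≡ 2 (mod 4), and set v_n(x) = Π_{k=1}^n (1 + γ ρ_{2k−1}(x)). Then for every m ≥ 1, ∫_0^1 |Σ_{n=1}^m ρ_{2n}(x) v_n(x)| dx ≥ (1/4) ∫_0^1 max_{1 ≤ n ≤ m} v_n(x) dx. -/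
/-!
Both integrands depend on `x` only through its first `m` base-16 digits, and each base-16 digit
is a pair of base-4 digits: the first one fixes `ρ_{2k-1}`, hence the weights `v_n`, the second
one fixes the sign `ρ_{2k}`. The base-16 digits are independent and uniform on `[0,1)`, so both
integrals are averages over digit strings. Fix the odd-position digits and an index `n₀`
maximising `v_n`; the sign `ρ_{2n₀}` is independent of all the other summands, which average to
zero, so by Jensen's inequality the average of `|Σ ρ_{2n} v_n|` is at least
`(average of |ρ|) · |v_{n₀}| = |v_{n₀}| / 2 ≥ v_{n₀} / 4`.
-/

open Set

open Finset MeasureTheory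
open scoped BigOperators Fin.IntCast

theorem intervalIntegral_comp_floor (g : ℤ → ℝ) (n : ℕ) :
    ∫ y in (0 : ℝ)..n, g ⌊y⌋ = ∑ j ∈ range n, g j := by
  have hcell (j : ℕ) :
      (fun y : ℝ => g ⌊y⌋) =ᵐ[volume.restrict (Set.Ioc (j : ℝ) (j + 1))] fun _ => g j := by
    rw [Measure.restrict_congr_set Ico_ae_eq_Ioc.symm]
    filter_upwards [ae_restrict_mem measurableSet_Ico] with y hy
    rw [Int.floor_eq_on_Ico (j : ℤ) y (by exact_mod_cast hy)]
  have hint (j : ℕ) : IntervalIntegrable (fun y => g ⌊y⌋) volume j (j + 1) :=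
    (intervalIntegrable_iff_integrableOn_Ioc_of_le (by linarith)).2
      ((integrableOn_const (by simp)).congr (hcell j).symm)
  have hsum := intervalIntegral.sum_integral_adjacent_intervals (a := ((↑) : ℕ → ℝ))
    (n := n) fun j _ => by simpa using hint j
  rw [Nat.cast_zero] at hsum
  rw [← hsum]
  refine sum_congr rfl fun j _ => ?_
  rw [Nat.cast_succ, intervalIntegral.integral_of_le (by linarith), integral_congr_ae (hcell j)]
  simp

theorem intervalIntegral_comp_floor_mul (g : ℤ → ℝ) {n : ℕ} (hn : n ≠ 0) :
    ∫ x in (0 : ℝ)..1, g ⌊n * x⌋ = 𝔼 j ∈ range n, g j := by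
  rw [intervalIntegral.integral_comp_mul_left (fun y => g ⌊y⌋) (by positivity), mul_zero,
    mul_one, intervalIntegral_comp_floor, expect_eq_sum_div_card, card_range, smul_eq_mul]
  ring

/-- The `k`-th base-`b` digit of `x` after the point; digit `0` is the units digit. -/
noncomputable def digit (b : ℕ) [NeZero b] (k : ℕ) (x : ℝ) : Fin b :=
  ⌊(b : ℝ) ^ k * x⌋

theorem floor_pow_mul_eq_floor_div (b : ℕ) [NeZero b] (k j : ℕ) (x : ℝ) :
    ⌊(b : ℝ) ^ k * x⌋ = ⌊(b : ℝ) ^ (k + j) * x⌋ / (b ^ j : ℕ) := by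
  rw [← Int.floor_div_natCast]
  congr 1
  have : (b : ℝ) ≠ 0 := NeZero.ne _
  push_cast
  field_simp
  ring

theorem intervalIntegral_comp_digit (b K : ℕ) [NeZero b] (F : (Fin K → Fin b) → ℝ) :
    ∫ x in (0 : ℝ)..1, F (fun i => digit b (i + 1) x) = 𝔼 d, F d := by
  set G : ℤ → ℝ := fun j => F fun i => ((j / (b ^ (K - (i + 1)) : ℕ) : ℤ) : Fin b)
  have hFG (x : ℝ) : F (fun i => digit b (i + 1) x) = G ⌊((b ^ K : ℕ) : ℝ) * x⌋ := by
    refine congrArg F (funext fun i => ?_)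
    rw [digit, floor_pow_mul_eq_floor_div b (i + 1) (K - (i + 1)), Nat.add_sub_cancel' i.isLt]
    push_cast; rfl
  simp_rw [hFG]
  have hrange : 𝔼 j ∈ range (b ^ K), G j = 𝔼 j : Fin (b ^ K), G j := by
    rw [expect_eq_sum_div_card, Fintype.expect_eq_sum_div_card,
      Fin.sum_univ_eq_sum_range (fun j => G j), card_range, Fintype.card_fin]
  rw [intervalIntegral_comp_floor_mul G (pow_ne_zero _ (NeZero.ne b)), hrange]
  -- the digits of `x` are those of `j = ⌊b ^ K * x⌋`, most significant first
  refine Fintype.expect_equiv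
    (finFunctionFinEquiv.symm.trans (Equiv.arrowCongr Fin.revPerm (Equiv.refl _))) _ _ fun j => ?_
  refine congrArg F (funext fun i => Fin.ext ?_)
  simp only [Equiv.trans_apply, Equiv.arrowCongr_apply, Equiv.coe_refl, Fin.revPerm_symm,
    Function.comp_apply, Fin.revPerm_apply, id_eq, finFunctionFinEquiv_symm_apply_val, Fin.val_rev,
    Fin.val_intCast]
  norm_cast

theorem Fintype.expect_comp_eval {κ α M : Type*} [Fintype κ] [DecidableEq κ] [Fintype α]
    [Nonempty α] [AddCommMonoid M] [Module ℚ≥0 M] (f : α → M) (j : κ) :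
    𝔼 g : κ → α, f (g j) = 𝔼 t, f t := by
  rw [Fintype.expect_equiv (Equiv.funSplitAt j α) (fun g => f (g j)) (fun p => f p.1)
      fun g => rfl,
    ← univ_product_univ, expect_product]
  simp

theorem Fintype.expect_arrow_prod {ι α β M : Type*} [Fintype ι] [DecidableEq ι] [Fintype α]
    [Fintype β] [AddCommMonoid M] [Module ℚ≥0 M] (F : (ι → α × β) → M) :
    𝔼 d, F d = 𝔼 o : ι → α, 𝔼 e : ι → β, F fun i => (o i, e i) := by
  rw [Fintype.expect_equiv (Equiv.arrowProdEquivProdArrow _ _ _) F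
    (fun p => F fun i => (p.1 i, p.2 i)) fun d => rfl, ← univ_product_univ, expect_product]

theorem expect_abs_mul_le_expect_abs_sum {ι α : Type*} [Fintype ι] [DecidableEq ι] [Fintype α]
    [Nonempty α] {ε : α → ℝ} (hε : 𝔼 t, ε t = 0) (a : ι → ℝ) (i : ι) :
    (𝔼 t, |ε t|) * |a i| ≤ 𝔼 e : ι → α, |∑ j, ε (e j) * a j| := by
  set R : ({j // j ≠ i} → α) → ℝ := fun g => ∑ j : {j // j ≠ i}, ε (g j) * a j
  have hR : 𝔼 g, R g = 0 := by
    simp only [R, expect_sum_comm, ← expect_mul, Fintype.expect_comp_eval, hε, zero_mul,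
      sum_const_zero]
  rw [Fintype.expect_equiv (Equiv.funSplitAt i α) (fun e => |∑ j, ε (e j) * a j|)
      (fun p => |ε p.1 * a i + R p.2|) fun e => by
      rw [Fintype.sum_eq_add_sum_subtype_ne _ i]; rfl,
    ← univ_product_univ, expect_product, expect_mul]
  refine expect_le_expect fun t _ => ?_
  calc |ε t| * |a i| = |𝔼 g, (ε t * a i + R g)| := by
        rw [expect_add_distrib, hR, Fintype.expect_const, add_zero, abs_mul]
    _ ≤ 𝔼 g, |ε t * a i + R g| := abs_expect_le _ _

def digitSign (t : Fin 4) : ℝ :=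
  if t = 1 then 1 else if t = 2 then -1 else 0

theorem rho_eq_digitSign (n : ℕ) (x : ℝ) : rho n x = digitSign (digit 4 n x) := by
  have h (r : ℤ) (t : Fin 4) : (r : Fin 4) = t ↔ r % 4 = (t : ℕ) := by
    rw [Fin.ext_iff, Fin.val_intCast]; omega
  simp only [rho, digitSign, digit, h]
  rfl

theorem expect_digitSign : 𝔼 t, digitSign t = 0 := by
  simp [Fintype.expect_eq_sum_div_card, Fin.sum_univ_four, digitSign]

theorem expect_abs_digitSign : 𝔼 t, |digitSign t| = 1 / 2 := by
  norm_num [Fintype.expect_eq_sum_div_card, Fin.sum_univ_four, digitSign, Fin.ext_iff]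

theorem quarter_mul_sup'_le_expect_abs_sum_digitSign {ι : Type*} [Fintype ι] [DecidableEq ι]
    (hι : (univ : Finset ι).Nonempty) (a : ι → ℝ) :
    1 / 4 * univ.sup' hι a ≤ 𝔼 e : ι → Fin 4, |∑ i, digitSign (e i) * a i| := by
  obtain ⟨i, -, hi⟩ := exists_mem_eq_sup' hι a
  calc 1 / 4 * univ.sup' hι a ≤ (𝔼 t, |digitSign t|) * |a i| := by
        rw [hi, expect_abs_digitSign]; linarith [le_abs_self (a i), abs_nonneg (a i)]
    _ ≤ _ := expect_abs_mul_le_expect_abs_sum expect_digitSign a i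

noncomputable def digitPair (k : ℕ) (x : ℝ) : Fin 4 × Fin 4 :=
  (digit 4 (2 * k + 1) x, digit 4 (2 * k + 2) x)

theorem digitPair_eq (k : ℕ) (x : ℝ) :
    digitPair k x = finProdFinEquiv.symm (digit 16 (k + 1) x) := by
  have h16 : ((16 : ℕ) : ℝ) ^ (k + 1) = ((4 : ℕ) : ℝ) ^ (2 * k + 1 + 1) := by
    rw [show 2 * k + 1 + 1 = 2 * (k + 1) by ring, pow_mul]; norm_num
  rw [digitPair, digit, digit, digit, h16, floor_pow_mul_eq_floor_div 4 (2 * k + 1) 1]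
  generalize ⌊((4 : ℕ) : ℝ) ^ (2 * k + 1 + 1) * x⌋ = n
  ext <;> simp only [finProdFinEquiv, Equiv.symm_mk, Equiv.coe_fn_mk, Fin.coe_divNat,
    Fin.coe_modNat, Fin.val_intCast, pow_one, Nat.cast_ofNat, Nat.reduceMul] <;> omega

theorem intervalIntegral_comp_digitPair (m : ℕ) (F : (Fin m → Fin 4 × Fin 4) → ℝ) :
    ∫ x in (0 : ℝ)..1, F (fun i => digitPair i x) = 𝔼 d, F d := by
  simp_rw [digitPair_eq]
  rw [intervalIntegral_comp_digit 16 m fun d => F fun i => finProdFinEquiv.symm (d i)]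
  exact Fintype.expect_equiv
    (Equiv.arrowCongr (Equiv.refl (Fin m)) (finProdFinEquiv (m := 4) (n := 4)).symm) _ F
    fun d => rfl

theorem map_Iic_eq_Icc {m : ℕ} (i : Fin m) :
    (Finset.Iic i).map (Fin.valEmbedding.trans (addRightEmbedding 1)) =
      Finset.Icc 1 ((i : ℕ) + 1) := by
  ext n
  simp only [mem_map, Finset.mem_Iic, Finset.mem_Icc, Function.Embedding.trans_apply,
    Fin.valEmbedding_apply, addRightEmbedding_apply]
  constructor
  · rintro ⟨k, hk, rfl⟩
    rw [Fin.le_iff_val_le_val] at hk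
    omega
  · intro h
    exact ⟨⟨n - 1, by omega⟩, by rw [Fin.le_iff_val_le_val]; simp only; omega, by simp only; omega⟩

theorem map_univ_eq_Icc (m : ℕ) :
    (univ : Finset (Fin m)).map (Fin.valEmbedding.trans (addRightEmbedding 1)) =
      Finset.Icc 1 m := by
  ext n
  simp only [mem_map, Finset.mem_univ, true_and, Finset.mem_Icc, Function.Embedding.trans_apply,
    Fin.valEmbedding_apply, addRightEmbedding_apply]
  constructor
  · rintro ⟨k, rfl⟩
    omega
  · intro h
    exact ⟨⟨n - 1, by omega⟩, by simp only; omega⟩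

noncomputable def oddWeight {m : ℕ} (γ : ℝ) (o : Fin m → Fin 4) (i : Fin m) : ℝ :=
  ∏ k ∈ Finset.Iic i, (1 + γ * digitSign (o k))

theorem vweight_eq_oddWeight (γ : ℝ) {m : ℕ} (i : Fin m) (x : ℝ) :
    vweight γ (i + 1) x = oddWeight γ (fun k => (digitPair k x).1) i := by
  rw [vweight, ← map_Iic_eq_Icc, prod_map]
  refine prod_congr rfl fun k _ => ?_
  simp [rho_eq_digitSign, digitPair, mul_add]

/-- For `γ ∈ (0,1)` and every `m ≥ 1`,
`∫_0^1 |Σ_{n=1}^m ρ_{2n}(x) v_n(x)| dx ≥ (1/4) ∫_0^1 max_{1 ≤ n ≤ m} v_n(x) dx`. -/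
theorem integral_abs_sum_lower_bound :
    ∀ γ : ℝ, 0 < γ → γ < 1 → ∀ m : ℕ, ∀ hm : 1 ≤ m,
      (1 / 4) * (∫ x in (0:ℝ)..1,
          (Finset.Icc 1 m).sup' (Finset.nonempty_Icc.mpr hm) (fun n => vweight γ n x)) ≤
        ∫ x in (0:ℝ)..1, |∑ n ∈ Finset.Icc 1 m, rho (2 * n) x * vweight γ n x| := by
  intro γ _ _ m hm
  have hne : (univ : Finset (Fin m)).Nonempty := univ_nonempty_iff.2 ⟨⟨0, hm⟩⟩
  set W : (Fin m → Fin 4 × Fin 4) → Fin m → ℝ := fun d => oddWeight γ fun k => (d k).1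
  have hsup (x : ℝ) : (Finset.Icc 1 m).sup' (Finset.nonempty_Icc.mpr hm) (vweight γ · x) =
      univ.sup' hne (W fun k => digitPair k x) := by
    rw [sup'_congr _ (map_univ_eq_Icc m).symm fun _ _ => rfl, sup'_map]
    exact sup'_congr _ rfl fun i _ => vweight_eq_oddWeight γ i x
  have hsum (x : ℝ) : ∑ n ∈ Finset.Icc 1 m, rho (2 * n) x * vweight γ n x =
      ∑ i : Fin m, digitSign (digitPair i x).2 * W (fun k => digitPair k x) i := by
    rw [← map_univ_eq_Icc, sum_map]
    refine sum_congr rfl fun i _ => ?_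
    simp [vweight_eq_oddWeight, rho_eq_digitSign, digitPair, W, mul_add]
  simp_rw [hsup, hsum]
  rw [intervalIntegral_comp_digitPair m fun d => univ.sup' hne (W d),
    intervalIntegral_comp_digitPair m fun d => |∑ i, digitSign (d i).2 * W d i|,
    Fintype.expect_arrow_prod, Fintype.expect_arrow_prod, mul_expect]
  refine expect_le_expect fun o _ => ?_
  simp only [W, Fintype.expect_const]
  exact quarter_mul_sup'_le_expect_abs_sum_digitSign hne (oddWeight γ o)
end
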